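/- arXiv:math/0306364 — 8 statements merged into one kernel-verified Lean document; each statement's English description precedes it below -/
import Mathlib

section
/- Let G be a group acting on a set X such that G separates X. Then for every k ≥ 1, every nontrivial reduced word w = v_1 v_2 ⋯ v_n of length n in the free group on k generators, and every point x_0 ∈ X, there exists a tuple (h_1, …, h_k) ∈ G^k such that the n+1 trajectory points x_0, x_1, …, x_n of x_0 under (w, (h_1,…,h_k)) are pairwise distinct. -/
/-- A group `G` acting on a set `X` *separates* `X` if for every finite subset
`Y ⊆ X` and every point `x ∉ Y` there is `g ∈ G` fixing every point of `Y`
pointwise and moving `x`. -/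
def Separates (G X : Type*) [Group G] [MulAction G X] : Prop :=
  ∀ (Y : Finset X) (x : X), x ∉ Y → ∃ g : G, (∀ y ∈ Y, g • y = y) ∧ g • x ≠ x

/-- Evaluation of the letter `p` (a generator index together with a sign) at the
tuple `g`: the letter `(i, true)` evaluates to `g i`, while `(i, false)`
evaluates to `(g i)⁻¹`. -/
def letterEval {G : Type*} [Group G] {k : ℕ} (g : Fin k → G) (p : Fin k × Bool) : G :=
  if p.2 then g p.1 else (g p.1)⁻¹

/-- The trajectory `x_0, x_1, …` of the point `x0` under the word with letters
`v 0, v 1, …` evaluated at the tuple `g`: `x_{j+1} = v_{j}(g) • x_j`. -/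
def traj {G X : Type*} [Group G] [MulAction G X] {k : ℕ}
    (g : Fin k → G) (v : ℕ → Fin k × Bool) (x0 : X) : ℕ → X
  | 0 => x0
  | j + 1 => letterEval g (v j) • traj g v x0 j

/-- The word with letters `v 0, …, v (n-1)` is reduced: no two adjacent letters
have the same generator index and opposite signs. -/
def IsReducedWord {k : ℕ} (n : ℕ) (v : ℕ → Fin k × Bool) : Prop :=
  ∀ j, j + 1 < n → (v j).1 = (v (j + 1)).1 → (v j).2 = (v (j + 1)).2

/-- Auxiliary: the tuple `h` corrected at index `im` by `t` (on the side
determined by the sign `bm`). -/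
def tweak {G : Type*} [Group G] {k : ℕ} (h : Fin k → G) (t : G) (im : Fin k) (bm : Bool) :
    Fin k → G :=
  fun a => if a = im then (if bm then t * h a else h a * t⁻¹) else h a

lemma tweak_eval_same {G : Type*} [Group G] {k : ℕ} (h : Fin k → G) (t : G)
    (im : Fin k) (bm : Bool) :
    letterEval (tweak h t im bm) (im, bm) = t * letterEval h (im, bm) := by
  cases bm <;> simp [tweak, letterEval, mul_inv_rev]

lemma tweak_eval_opp {G : Type*} [Group G] {k : ℕ} (h : Fin k → G) (t : G)
    (im : Fin k) (bm : Bool) (b : Bool) (hb : b ≠ bm) :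
    letterEval (tweak h t im bm) (im, b) = letterEval h (im, b) * t⁻¹ := by
  cases bm <;> cases b <;> simp_all [tweak, letterEval, mul_inv_rev]

lemma tweak_eval_other {G : Type*} [Group G] {k : ℕ} (h : Fin k → G) (t : G)
    (im : Fin k) (bm : Bool) (a : Fin k) (b : Bool) (ha : a ≠ im) :
    letterEval (tweak h t im bm) (a, b) = letterEval h (a, b) := by
  cases b <;> simp [tweak, letterEval, ha]

lemma letterEval_opp {G : Type*} [Group G] {k : ℕ} (h : Fin k → G)
    (a : Fin k) (b b' : Bool) (hb : b ≠ b') :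
    letterEval h (a, b) = (letterEval h (a, b'))⁻¹ := by
  cases b <;> cases b' <;> simp_all [letterEval]

/-- If `G` separates `X` then for every nontrivial reduced word
`w = v_1 ⋯ v_n` in the free group on `k` generators and every point `x_0 ∈ X`
there is a tuple `(h_1, …, h_k)` such that the `n+1` trajectory points
`x_0, x_1, …, x_n` are pairwise distinct. -/
theorem separates_distinct_trajectory {G X : Type*} [Group G] [MulAction G X]
    (hsep : Separates G X) {k n : ℕ} (hk : 1 ≤ k) (hn : 1 ≤ n)
    (v : ℕ → Fin k × Bool) (hred : IsReducedWord n v) (x0 : X) :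
    ∃ h : Fin k → G, ∀ i j, i ≤ n → j ≤ n → i ≠ j →
      traj h v x0 i ≠ traj h v x0 j := by
  classical
  suffices H : ∀ m, m ≤ n → ∃ h : Fin k → G, ∀ i j, i ≤ m → j ≤ m → i ≠ j →
      traj h v x0 i ≠ traj h v x0 j from H n le_rfl
  intro m
  induction m with
  | zero =>
    exact fun _ => ⟨fun _ => 1, fun i j hi hj hij => absurd (by omega : i = j) hij⟩
  | succ m ih =>
    intro hm1
    obtain ⟨h, hdist⟩ := ih (by omega)
    set x : ℕ → X := traj h v x0 with hxdef
    have hstep : ∀ j, x (j + 1) = letterEval h (v j) • x j := fun j => rfl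
    by_cases hcase : ∀ q ≤ m, x (m + 1) ≠ x q
    · refine ⟨h, ?_⟩
      intro a b ha hb hab
      by_cases haa : a = m + 1
      · subst haa; exact hcase b (by omega)
      · by_cases hbb : b = m + 1
        · subst hbb; exact fun e => hcase a (by omega) e.symm
        · exact hdist a b (by omega) (by omega) hab
    · push_neg at hcase
      obtain ⟨p, hp, hyp⟩ := hcase
      have hdist' : ∀ a b, a ≤ m → b ≤ m → x a = x b → a = b := by
        intro a b ha hb hab
        by_contra hne
        exact hdist a b ha hb hne hab
      -- the finite set of points our correcting element must fix
      set F : Finset X :=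
        ((((Finset.range m).filter
            (fun j => (v j).1 = (v m).1 ∧ (v j).2 = (v m).2)).image (fun j => x (j + 1))) ∪
         (((Finset.range m).filter
            (fun j => (v j).1 = (v m).1 ∧ (v j).2 ≠ (v m).2)).image x)) ∪
        (((Finset.range (m + 1)).filter (fun q => q ≠ p)).image x) with hF
      have hxp : x p ∉ F := by
        rw [hF]
        simp only [Finset.mem_union, Finset.mem_image, Finset.mem_filter, Finset.mem_range]
        rintro (((⟨j, ⟨hjm, hj1, hj2⟩, hje⟩ | ⟨j, ⟨hjm, hj1, hj2⟩, hje⟩) | ⟨q, ⟨hqm, hqp⟩, hqe⟩))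
        · -- x p = x (j+1) with v j = v m, j < m
          have hpj : p = j + 1 := (hdist' p (j + 1) hp (by omega) hje.symm)
          have hvv : v j = v m := Prod.ext hj1 hj2
          have he : letterEval h (v m) • x m = letterEval h (v m) • x j := by
            rw [← hstep m, ← hvv, ← hstep j, ← hpj, hyp]
          have : m = j := hdist' m j le_rfl (by omega) (smul_left_cancel _ he)
          omega
        · -- x p = x j with same index, opposite sign, j < m
          have hpj : p = j := hdist' p j hp (by omega) hje.symm
          have hinv : letterEval h (v j) = (letterEval h (v m))⁻¹ := by
            have : v j = ((v m).1, (v j).2) := Prod.ext hj1 rfl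
            rw [this, letterEval_opp h (v m).1 (v j).2 (v m).2 hj2]
          have hxm : x (j + 1) = x m := by
            rw [hstep j, hinv, ← hpj, ← hyp, hstep m, inv_smul_smul]
          have hjm1 : j + 1 = m := hdist' (j + 1) m (by omega) le_rfl hxm
          have := hred j (by omega) (by rw [hjm1]; exact hj1)
          rw [hjm1] at this
          exact hj2 this
        · exact hqp (hdist' q p (by omega) hp hqe)
      obtain ⟨t, htfix, htmove⟩ := hsep F (x p) hxp
      set h' : Fin k → G := tweak h t (v m).1 (v m).2 with hh'
      -- fixed-point facts
      have hfix1 : ∀ j, j < m → (v j).1 = (v m).1 → (v j).2 = (v m).2 →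
          t • x (j + 1) = x (j + 1) := by
        intro j hj h1 h2
        refine htfix _ ?_
        rw [hF]
        simp only [Finset.mem_union, Finset.mem_image, Finset.mem_filter, Finset.mem_range]
        exact Or.inl (Or.inl ⟨j, ⟨hj, h1, h2⟩, rfl⟩)
      have hfix2 : ∀ j, j < m → (v j).1 = (v m).1 → (v j).2 ≠ (v m).2 →
          t • x j = x j := by
        intro j hj h1 h2
        refine htfix _ ?_
        rw [hF]
        simp only [Finset.mem_union, Finset.mem_image, Finset.mem_filter, Finset.mem_range]
        exact Or.inl (Or.inr ⟨j, ⟨hj, h1, h2⟩, rfl⟩)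
      have hfix3 : ∀ q, q ≤ m → q ≠ p → t • x q = x q := by
        intro q hq hqp
        refine htfix _ ?_
        rw [hF]
        simp only [Finset.mem_union, Finset.mem_image, Finset.mem_filter, Finset.mem_range]
        exact Or.inr ⟨q, ⟨by omega, hqp⟩, rfl⟩
      -- the old trajectory is preserved up to step m
      have hpres : ∀ j, j ≤ m → traj h' v x0 j = x j := by
        intro j hj
        induction j with
        | zero => rfl
        | succ j ihj =>
          have hxj : traj h' v x0 (j + 1) = letterEval h' (v j) • x j := by
            show letterEval h' (v j) • traj h' v x0 j = _
            rw [ihj (by omega)]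
          by_cases h1 : (v j).1 = (v m).1
          · by_cases h2 : (v j).2 = (v m).2
            · have hvv : v j = ((v m).1, (v m).2) := Prod.ext h1 h2
              rw [hxj, hvv, hh', tweak_eval_same, mul_smul, ← hvv, ← hstep j]
              exact hfix1 j (by omega) h1 h2
            · have hvv : v j = ((v m).1, (v j).2) := Prod.ext h1 rfl
              rw [hxj, hvv, hh', tweak_eval_opp h t (v m).1 (v m).2 (v j).2 h2, mul_smul,
                hstep j, hvv]
              congr 1
              have hf := hfix2 j (by omega) h1 h2
              calc t⁻¹ • x j = t⁻¹ • (t • x j) := by rw [hf]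
                _ = x j := inv_smul_smul t (x j)
          · have hvv : v j = ((v j).1, (v j).2) := rfl
            rw [hxj, hvv, hh', tweak_eval_other h t (v m).1 (v m).2 (v j).1 (v j).2 h1,
              hstep j, hvv]
      -- the new trajectory point
      have hnew : traj h' v x0 (m + 1) = t • x p := by
        show letterEval h' (v m) • traj h' v x0 m = _
        have hvv : v m = ((v m).1, (v m).2) := rfl
        rw [hpres m le_rfl, hvv, hh', tweak_eval_same, mul_smul, ← hvv, ← hstep m, hyp]
      have hnewne : ∀ q, q ≤ m → t • x p ≠ x q := by
        intro q hq he
        by_cases hqp : q = p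
        · subst hqp; exact htmove he
        · have hfixq := hfix3 q hq hqp
          have : t • x p = t • x q := by rw [he, hfixq]
          exact hqp ((hdist' q p hq hp (smul_left_cancel t this).symm))
      refine ⟨h', ?_⟩
      intro a b ha hb hab
      by_cases haa : a = m + 1
      · subst haa
        rw [hnew, hpres b (by omega)]
        exact hnewne b (by omega)
      · by_cases hbb : b = m + 1
        · subst hbb
          rw [hnew, hpres a (by omega)]
          exact fun e => hnewne a (by omega) e.symm
        · rw [hpres a (by omega), hpres b (by omega)]
          exact hdist a b (by omega) (by omega) hab
end

section
/- Let G be a group acting on a set X such that G separates X. Then for every finite subset Y ⊆ X, every orbit of the pointwise stabilizer G_Y on X \ Y is infinite. -/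
/-- If `G` separates `X`, then for every finite `Y ⊆ X` every orbit of the
pointwise stabilizer `G_Y` on `X \ Y` is infinite: for every `x ∉ Y`, the orbit
of `x` under `G_Y` is an infinite set. -/
theorem separates_orbits_infinite {G X : Type*} [Group G] [MulAction G X]
    (hsep : Separates G X) (Y : Finset X) (x : X) (hx : x ∉ Y) :
    {z : X | ∃ g : G, (∀ y ∈ Y, g • y = y) ∧ g • x = z}.Infinite := by
  classical
  set O := {z : X | ∃ g : G, (∀ y ∈ Y, g • y = y) ∧ g • x = z} with hO
  by_contra hfin
  rw [Set.not_infinite] at hfin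
  have hxO : x ∈ O := ⟨1, fun y _ => one_smul G y, one_smul G x⟩
  set S := hfin.toFinset with hS
  obtain ⟨g, hgfix, hgx⟩ := hsep (Y ∪ S.erase x) x (by
    simp only [Finset.mem_union, Finset.mem_erase]
    rintro (h | ⟨h, -⟩)
    · exact hx h
    · exact h rfl)
  have hfixY : ∀ y ∈ Y, g • y = y := fun y hy =>
    hgfix y (Finset.mem_union_left _ hy)
  have hz : g • x ∈ O := ⟨g, hfixY, rfl⟩
  have hzS : g • x ∈ S.erase x := Finset.mem_erase.2 ⟨hgx, hfin.mem_toFinset.2 hz⟩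
  have : g • (g • x) = g • x := hgfix _ (Finset.mem_union_right _ hzS)
  exact hgx (smul_left_cancel g this)
end

section
/- Thompson's group F satisfies no group law: for every k ≥ 1 and every nontrivial element w of the free group on k generators, there exist f_1, …, f_k ∈ F such that the evaluation w(f_1, …, f_k) is not the identity map of [0,1]. -/
open Set

/-- The closed unit interval `[0,1] ⊆ ℝ`. -/
abbrev unitInt : Set ℝ := Set.Icc (0 : ℝ) 1

/-- A real number is dyadic if it has the form `a / 2 ^ b` with `a : ℤ`, `b : ℕ`. -/
def IsDyadic (x : ℝ) : Prop := ∃ (a : ℤ) (b : ℕ), x = (a : ℝ) / 2 ^ b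

/-- A bijection of `[0,1]` belongs to Thompson's group `F` if it is an increasing
homeomorphism of `[0,1]` which is piecewise affine with finitely many dyadic
breakpoints `0 = t_0 < t_1 < ⋯ < t_r = 1` and slopes integer powers of `2`. -/
def IsThompson (f : Equiv.Perm unitInt) : Prop :=
  (∀ x y : unitInt, (x : ℝ) < y → (f x : ℝ) < f y) ∧
  Continuous (fun x : unitInt => f x) ∧
  ∃ (r : ℕ) (t : Fin (r + 1) → ℝ), StrictMono t ∧ t 0 = 0 ∧ t (Fin.last r) = 1 ∧
    (∀ i, IsDyadic (t i)) ∧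
    ∀ i : Fin r, ∃ (m : ℤ) (c : ℝ), ∀ x : unitInt,
      (x : ℝ) ∈ Set.Icc (t i.castSucc) (t i.succ) → (f x : ℝ) = 2 ^ m * x + c

/-!
Let `x₀ x₁ ⋯ xₙ₋₁` be the reduced word of `w` and `p_d = 1 - 2^{-(d+2)}`. For each generator we
prescribe an increasing map on `p₀ < ⋯ < pₙ` such that the letter `x_j` sends `p_{j+1}` to `p_j`;
the prescriptions forced by two adjacent letters clash with monotonicity only if these letters
cancel, which reducedness excludes. Since `F` acts transitively on increasing tuples of dyadic
rationals in `(0, 1)` (interpolate piecewise affinely, after splitting every gap in two so that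
all slopes are powers of `2`), these maps extend to elements of `F`, and `w` then sends `pₙ` to
`p₀ ≠ pₙ`.
-/

lemma isDyadic_zero : IsDyadic 0 := ⟨0, 0, by simp⟩

lemma isDyadic_one : IsDyadic 1 := ⟨1, 0, by simp⟩

lemma IsDyadic.add {x y : ℝ} (hx : IsDyadic x) (hy : IsDyadic y) : IsDyadic (x + y) := by
  obtain ⟨a, b, rfl⟩ := hx
  obtain ⟨c, d, rfl⟩ := hy
  refine ⟨a * 2 ^ d + c * 2 ^ b, b + d, ?_⟩
  push_cast
  field_simp
  ring

lemma IsDyadic.neg {x : ℝ} (hx : IsDyadic x) : IsDyadic (-x) := by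
  obtain ⟨a, b, rfl⟩ := hx
  exact ⟨-a, b, by push_cast; ring⟩

lemma IsDyadic.sub {x y : ℝ} (hx : IsDyadic x) (hy : IsDyadic y) : IsDyadic (x - y) := by
  simpa only [sub_eq_add_neg] using hx.add hy.neg

lemma IsDyadic.two_zpow_mul {x : ℝ} (hx : IsDyadic x) (z : ℤ) : IsDyadic (2 ^ z * x) := by
  obtain ⟨a, b, rfl⟩ := hx
  obtain ⟨n, rfl | rfl⟩ := z.eq_nat_or_neg
  · exact ⟨a * 2 ^ n, b, by push_cast; rw [zpow_natCast]; ring⟩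
  · exact ⟨a, b + n, by rw [zpow_neg, zpow_natCast, pow_add]; field_simp⟩

lemma exists_two_zpow_split {A B : ℝ} (hA : 0 < A) (hB : 0 < B) (hdA : IsDyadic A)
    (hdB : IsDyadic B) :
    ∃ u v : ℝ, u ∈ Ioo 0 A ∧ v ∈ Ioo 0 B ∧ IsDyadic u ∧
      (∃ s : ℤ, v = 2 ^ s * u) ∧ ∃ s : ℤ, B - v = 2 ^ s * (A - u) := by
  set t := Int.log 2 (B / A)
  have hp : (0 : ℝ) < 2 ^ t := zpow_pos two_pos t
  have hlo : 2 ^ t * A ≤ B := by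
    have := Int.zpow_log_le_self (b := 2) one_lt_two (div_pos hB hA)
    rwa [Nat.cast_ofNat, le_div_iff₀ hA] at this
  have hhi : B < 2 * 2 ^ t * A := by
    have := Int.lt_zpow_succ_log_self (b := 2) one_lt_two (B / A)
    rwa [Nat.cast_ofNat, zpow_add_one₀ two_ne_zero, div_lt_iff₀ hA, mul_comm _ (2 : ℝ)] at this
  -- With `2 ^ t < B / A < 2 ^ (t + 1)` the two slopes are `2 ^ (t + 1)` and `2 ^ t`;
  -- if `B / A = 2 ^ t`, halving both gaps will do.
  rcases hlo.lt_or_eq with hlt | heq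
  · have hu : IsDyadic (B / 2 ^ t - A) := by
      rw [div_eq_inv_mul, ← zpow_neg]
      exact (hdB.two_zpow_mul _).sub hdA
    refine ⟨B / 2 ^ t - A, 2 * B - 2 * 2 ^ t * A, ⟨?_, ?_⟩, ⟨?_, ?_⟩, hu, ⟨t + 1, ?_⟩, t, ?_⟩
    · rwa [sub_pos, lt_div_iff₀ hp, mul_comm]
    · rw [sub_lt_iff_lt_add, div_lt_iff₀ hp]; linarith
    · linarith
    · linarith
    · rw [zpow_add_one₀ two_ne_zero]; field_simp
    · field_simp; ring
  · refine ⟨A / 2, B / 2, ⟨by positivity, by linarith⟩, ⟨by positivity, by linarith⟩,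
      by simpa [div_eq_inv_mul] using hdA.two_zpow_mul (-1), ⟨t, ?_⟩, t, ?_⟩ <;>
    rw [← heq] <;> ring

lemma exists_lt_mem_Ico {α : Type*} [LinearOrder α] {t : ℕ → α} {r : ℕ} {x : α}
    (h0 : t 0 ≤ x) (hr : x < t r) : ∃ l < r, x ∈ Ico (t l) (t (l + 1)) := by
  classical
  obtain ⟨r, rfl⟩ : ∃ r', r = r' + 1 :=
    Nat.exists_eq_succ_of_ne_zero (by rintro rfl; exact (h0.trans_lt hr).false)
  have hex : ∃ l, x < t (l + 1) := ⟨r, hr⟩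
  refine ⟨Nat.find hex, Nat.lt_succ_of_le (Nat.find_min' hex hr), ?_, Nat.find_spec hex⟩
  · rcases h : Nat.find hex with _ | l
    · exact h0
    · exact not_lt.1 (Nat.find_min hex (h ▸ l.lt_succ_self))

section PiecewiseAffine

variable (t : ℕ → ℝ) (s : ℕ → ℤ) (r : ℕ)

/-- The function vanishing at `t 0` with slope `2 ^ s l` on `[t l, t (l + 1)]` for `l < r`,
constant outside `[t 0, t r]`. -/
noncomputable def pwAffine (x : ℝ) : ℝ :=
  ∑ l ∈ Finset.range r, 2 ^ s l * (max (t l) (min x (t (l + 1))) - t l)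

lemma continuous_pwAffine : Continuous (pwAffine t s r) := by
  unfold pwAffine
  fun_prop

lemma strictMonoOn_pwAffine : StrictMonoOn (pwAffine t s r) (Icc (t 0) (t r)) := by
  intro x hx y hy hxy
  obtain ⟨l, hl, hxl⟩ := exists_lt_mem_Ico hx.1 (hxy.trans_le hy.2)
  apply Finset.sum_lt_sum
  · intro j _
    gcongr
  · refine ⟨l, Finset.mem_range.2 hl, ?_⟩
    have hclamp : max (t l) (min x (t (l + 1))) = x := by
      rw [min_eq_left hxl.2.le, max_eq_right hxl.1]
    rw [hclamp]
    gcongr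
    exact (lt_min hxy hxl.2).trans_le (le_max_right _ _)

variable {t r}

lemma pwAffine_eq_of_mem_Icc (ht : StrictMonoOn t (Iic r)) {l : ℕ} (hl : l < r) {x : ℝ}
    (hx : x ∈ Icc (t l) (t (l + 1))) :
    pwAffine t s r x = ∑ j ∈ Finset.range l, 2 ^ s j * (t (j + 1) - t j) + 2 ^ s l * (x - t l) := by
  have hmono : ∀ i j, i ≤ j → j ≤ r → t i ≤ t j := fun i j hij hj =>
    ht.monotoneOn (mem_Iic.2 (hij.trans hj)) (mem_Iic.2 hj) hij
  obtain ⟨q, rfl⟩ := Nat.exists_eq_add_of_lt hl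
  rw [pwAffine, show l + q + 1 = l + 1 + q by ring, Finset.sum_range_add, Finset.sum_range_succ]
  have hbefore : ∀ j ∈ Finset.range l, 2 ^ s j * (max (t j) (min x (t (j + 1))) - t j) =
      2 ^ s j * (t (j + 1) - t j) := by
    intro j hj
    have hj := Finset.mem_range.1 hj
    rw [min_eq_right ((hmono (j + 1) l hj (by omega)).trans hx.1),
      max_eq_right (hmono j (j + 1) (by omega) (by omega))]
  have hafter : ∀ j ∈ Finset.range q, 2 ^ s (l + 1 + j) *
      (max (t (l + 1 + j)) (min x (t (l + 1 + j + 1))) - t (l + 1 + j)) = 0 := by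
    intro j hj
    have hj := Finset.mem_range.1 hj
    rw [max_eq_left ((min_le_left _ _).trans (hx.2.trans (hmono _ _ (by omega) (by omega)))),
      sub_self, mul_zero]
  rw [Finset.sum_congr rfl hbefore, Finset.sum_eq_zero hafter, min_eq_left hx.2,
    max_eq_right hx.1, add_zero]

lemma pwAffine_apply_of_le (ht : StrictMonoOn t (Iic r)) {j : ℕ} (hj : j ≤ r) :
    pwAffine t s r (t j) = ∑ l ∈ Finset.range j, 2 ^ s l * (t (l + 1) - t l) := by
  rcases hj.lt_or_eq with hj | rfl
  · rw [pwAffine_eq_of_mem_Icc s ht hj ⟨le_rfl, ht.monotoneOn (mem_Iic.2 hj.le) (mem_Iic.2 hj)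
      j.le_succ⟩, sub_self, mul_zero, add_zero]
  · cases j with
    | zero => simp [pwAffine]
    | succ j =>
      rw [pwAffine_eq_of_mem_Icc s ht j.lt_succ_self ⟨ht.monotoneOn (mem_Iic.2 j.le_succ)
        (mem_Iic.2 le_rfl) j.le_succ, le_rfl⟩, Finset.sum_range_succ]

end PiecewiseAffine

lemma exists_perm_unitInt_coe_eq {F : ℝ → ℝ} (hF : ContinuousOn F unitInt)
    (hmono : StrictMonoOn F unitInt) (h0 : F 0 = 0) (h1 : F 1 = 1) :
    ∃ e : Equiv.Perm unitInt, ∀ x, (e x : ℝ) = F x := by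
  have hbij : BijOn F unitInt unitInt := by
    refine ⟨fun x hx => ⟨?_, ?_⟩, hmono.injOn, ?_⟩
    · rw [← h0]; exact hmono.monotoneOn (left_mem_Icc.2 zero_le_one) hx hx.1
    · rw [← h1]; exact hmono.monotoneOn hx (right_mem_Icc.2 zero_le_one) hx.2
    · have h := intermediate_value_Icc zero_le_one hF
      rwa [h0, h1] at h
  exact ⟨hbij.equiv F, fun _ => rfl⟩

theorem exists_isThompson_of_slopes {r : ℕ} {t u : ℕ → ℝ} (ht : StrictMonoOn t (Iic r))
    (ht0 : t 0 = 0) (htr : t r = 1) (hu0 : u 0 = 0) (hur : u r = 1)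
    (hdy : ∀ j ≤ r, IsDyadic (t j))
    (hslope : ∀ l < r, ∃ m : ℤ, u (l + 1) - u l = 2 ^ m * (t (l + 1) - t l)) :
    ∃ f : Equiv.Perm unitInt, IsThompson f ∧
      ∀ j ≤ r, ∀ x : unitInt, (x : ℝ) = t j → (f x : ℝ) = u j := by
  have : ∀ l, ∃ m : ℤ, l < r → u (l + 1) - u l = 2 ^ m * (t (l + 1) - t l) := fun l => by
    by_cases hl : l < r
    · obtain ⟨m, hm⟩ := hslope l hl; exact ⟨m, fun _ => hm⟩
    · exact ⟨0, fun h => absurd h hl⟩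
  choose s hs using this
  have hnode : ∀ j ≤ r, pwAffine t s r (t j) = u j := fun j hj => by
    rw [pwAffine_apply_of_le s ht hj, ← Finset.sum_congr rfl fun l hl =>
      hs l ((Finset.mem_range.1 hl).trans_le hj), Finset.sum_range_sub, hu0, sub_zero]
  have hmono : StrictMonoOn (pwAffine t s r) unitInt := by
    simpa only [ht0, htr] using strictMonoOn_pwAffine t s r
  obtain ⟨e, he⟩ := exists_perm_unitInt_coe_eq (continuous_pwAffine t s r).continuousOn hmono
    (by simpa only [ht0, hu0] using hnode 0 r.zero_le)
    (by simpa only [htr, hur] using hnode r le_rfl)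
  refine ⟨e, ⟨fun x y hxy => ?_, ?_, r, fun i => t i, fun i j hij => ?_, ht0, htr,
    fun i => hdy i i.is_le, fun l => ⟨s l, u l - 2 ^ s l * t l, fun x hx => ?_⟩⟩,
    fun j hj x hx => by rw [he, hx, hnode j hj]⟩
  · rw [he, he]; exact hmono x.2 y.2 hxy
  · rw [Topology.IsInducing.subtypeVal.continuous_iff]
    simpa only [Function.comp_def, he] using (continuous_pwAffine t s r).comp continuous_subtype_val
  · exact ht i.is_le j.is_le hij
  · simp only [Fin.val_castSucc, Fin.val_succ] at hx
    rw [he, pwAffine_eq_of_mem_Icc s ht l.is_lt hx, ← pwAffine_apply_of_le s ht l.is_lt.le,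
      hnode l l.is_lt.le]
    ring

noncomputable def interleave (a d : ℕ → ℝ) (c : ℕ) : ℝ :=
  a (c / 2) + if c % 2 = 1 then d (c / 2) else 0

@[simp]
lemma interleave_two_mul (a d : ℕ → ℝ) (j : ℕ) : interleave a d (2 * j) = a j := by
  simp [interleave]

@[simp]
lemma interleave_two_mul_add_one (a d : ℕ → ℝ) (j : ℕ) :
    interleave a d (2 * j + 1) = a j + d j := by
  simp [interleave, Nat.add_mod, Nat.add_div]

lemma interleave_two_mul_add_two (a d : ℕ → ℝ) (j : ℕ) :
    interleave a d (2 * j + 1 + 1) = a (j + 1) := by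
  rw [show 2 * j + 1 + 1 = 2 * (j + 1) by ring, interleave_two_mul]

theorem exists_isThompson_interpolating {m : ℕ} {a b : ℕ → ℝ} (ha : StrictMonoOn a (Iic m))
    (hb : StrictMonoOn b (Iic m)) (ha0 : a 0 = 0) (ham : a m = 1) (hb0 : b 0 = 0)
    (hbm : b m = 1) (hda : ∀ j ≤ m, IsDyadic (a j)) (hdb : ∀ j ≤ m, IsDyadic (b j)) :
    ∃ f : Equiv.Perm unitInt, IsThompson f ∧
      ∀ j ≤ m, ∀ x : unitInt, (x : ℝ) = a j → (f x : ℝ) = b j := by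
  have hsplit : ∀ j, ∃ U V : ℝ, j < m → U ∈ Ioo 0 (a (j + 1) - a j) ∧
      V ∈ Ioo 0 (b (j + 1) - b j) ∧ IsDyadic U ∧ (∃ s : ℤ, V = 2 ^ s * U) ∧
      ∃ s : ℤ, b (j + 1) - b j - V = 2 ^ s * (a (j + 1) - a j - U) := fun j => by
    by_cases hj : j < m
    · have hj' : j ∈ Iic m := mem_Iic.2 hj.le
      have hj1 : j + 1 ∈ Iic m := mem_Iic.2 hj
      obtain ⟨U, V, hUV⟩ := exists_two_zpow_split (sub_pos.2 (ha hj' hj1 j.lt_succ_self))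
        (sub_pos.2 (hb hj' hj1 j.lt_succ_self)) ((hda _ hj).sub (hda _ hj.le))
        ((hdb _ hj).sub (hdb _ hj.le))
      exact ⟨U, V, fun _ => hUV⟩
    · exact ⟨0, 0, fun h => absurd h hj⟩
  choose U V hUV using hsplit
  have hmono : StrictMonoOn (interleave a U) (Iic (2 * m)) := by
    refine strictMonoOn_Iic_of_lt_succ fun c hc => ?_
    rw [Order.succ_eq_add_one]
    obtain ⟨j, rfl | rfl⟩ := c.even_or_odd'
    · have := (hUV j (by omega)).1.1
      simp only [interleave_two_mul, interleave_two_mul_add_one]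
      linarith
    · have := (hUV j (by omega)).1.2
      simp only [interleave_two_mul_add_one, interleave_two_mul_add_two]
      linarith
  have hdyadic : ∀ c ≤ 2 * m, IsDyadic (interleave a U c) := by
    intro c hc
    obtain ⟨j, rfl | rfl⟩ := c.even_or_odd'
    · simpa using hda j (by omega)
    · simpa using (hda j (by omega)).add (hUV j (by omega)).2.2.1
  have hslope : ∀ c < 2 * m, ∃ s : ℤ, interleave b V (c + 1) - interleave b V c =
      2 ^ s * (interleave a U (c + 1) - interleave a U c) := by
    intro c hc
    obtain ⟨j, rfl | rfl⟩ := c.even_or_odd'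
    · obtain ⟨s, hs⟩ := (hUV j (by omega)).2.2.2.1
      exact ⟨s, by simpa using hs⟩
    · obtain ⟨s, hs⟩ := (hUV j (by omega)).2.2.2.2
      refine ⟨s, ?_⟩
      simp only [interleave_two_mul_add_one, interleave_two_mul_add_two]
      linear_combination hs
  obtain ⟨f, hf, hnode⟩ := exists_isThompson_of_slopes hmono (by simpa [interleave] using ha0)
    (by simpa using ham) (by simpa [interleave] using hb0) (by simpa using hbm) hdyadic hslope
  exact ⟨f, hf, fun j hj x hx => by simpa using hnode (2 * j) (by omega) x (by simpa using hx)⟩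

noncomputable def padUnit (a : ℕ → ℝ) (n c : ℕ) : ℝ :=
  if c = 0 then 0 else if c ≤ n + 1 then a (c - 1) else 1

@[simp]
lemma padUnit_zero (a : ℕ → ℝ) (n : ℕ) : padUnit a n 0 = 0 := rfl

lemma padUnit_succ (a : ℕ → ℝ) {n c : ℕ} (hc : c ≤ n) : padUnit a n (c + 1) = a c := by
  simp [padUnit, hc]

@[simp]
lemma padUnit_last (a : ℕ → ℝ) (n : ℕ) : padUnit a n (n + 2) = 1 := by
  simp [padUnit]

lemma strictMonoOn_padUnit {a : ℕ → ℝ} {n : ℕ} (ha : StrictMonoOn a (Iic n)) (h0 : 0 < a 0)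
    (hn : a n < 1) : StrictMonoOn (padUnit a n) (Iic (n + 2)) := by
  refine strictMonoOn_Iic_of_lt_succ fun c hc => ?_
  rw [Order.succ_eq_add_one]
  rcases c with _ | c
  · rwa [padUnit_zero, padUnit_succ a n.zero_le]
  rcases (Nat.lt_succ_iff.1 (Nat.succ_lt_succ_iff.1 hc)).lt_or_eq with hc | rfl
  · rw [padUnit_succ a hc.le, padUnit_succ a hc]
    exact ha (mem_Iic.2 hc.le) (mem_Iic.2 hc) c.lt_succ_self
  · rwa [padUnit_succ a le_rfl, show c + 1 + 1 = c + 2 by rfl, padUnit_last]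

lemma isDyadic_padUnit {a : ℕ → ℝ} {n : ℕ} (ha : ∀ j ≤ n, IsDyadic (a j)) (c : ℕ) :
    IsDyadic (padUnit a n c) := by
  unfold padUnit
  split_ifs with h0 hc
  · exact isDyadic_zero
  · exact ha _ (by omega)
  · exact isDyadic_one

theorem exists_isThompson_interpolating_of_mem_Ioo {n : ℕ} {a b : ℕ → ℝ}
    (ha : StrictMonoOn a (Iic n)) (hb : StrictMonoOn b (Iic n)) (ha0 : 0 < a 0) (han : a n < 1)
    (hb0 : 0 < b 0) (hbn : b n < 1) (hda : ∀ j ≤ n, IsDyadic (a j))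
    (hdb : ∀ j ≤ n, IsDyadic (b j)) :
    ∃ f : Equiv.Perm unitInt, IsThompson f ∧
      ∀ j ≤ n, ∀ x : unitInt, (x : ℝ) = a j → (f x : ℝ) = b j := by
  obtain ⟨f, hf, hnode⟩ := exists_isThompson_interpolating (strictMonoOn_padUnit ha ha0 han)
    (strictMonoOn_padUnit hb hb0 hbn) (padUnit_zero a n) (padUnit_last a n) (padUnit_zero b n)
    (padUnit_last b n) (fun c _ => isDyadic_padUnit hda c) (fun c _ => isDyadic_padUnit hdb c)
  refine ⟨f, hf, fun j hj x hx => ?_⟩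
  rw [← padUnit_succ b hj]
  exact hnode (j + 1) (by omega) x (by rw [padUnit_succ a hj, hx])

lemma prod_apply_eq_of_chain {α : Type*} (l : List (Equiv.Perm α)) (p : ℕ → α)
    (h : ∀ j (hj : j < l.length), l[j] (p (j + 1)) = p j) : l.prod (p l.length) = p 0 := by
  induction l generalizing p with
  | nil => rfl
  | cons g l ih =>
    rw [List.prod_cons, Equiv.Perm.mul_apply, List.length_cons,
      ih (fun j => p (j + 1)) fun j hj => h (j + 1) (by simpa using hj)]
    exact h 0 (by simp)

section ScaledPoints

variable {c c' : ℕ → ℝ}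

noncomputable def scaledPt (c : ℕ → ℝ) (d : ℕ) : ℝ := 1 - c d / 2 ^ (d + 2)

lemma strictMono_scaledPt (hc : ∀ d, c (d + 1) < 2 * c d) : StrictMono (scaledPt c) := by
  refine strictMono_nat_of_lt_succ fun d => ?_
  have := hc d
  rw [scaledPt, scaledPt, pow_succ 2 (d + 1 + 1), sub_lt_sub_iff_left,
    div_lt_div_iff₀ (by positivity) (by positivity)]
  nlinarith [pow_pos (two_pos : (0 : ℝ) < 2) (d + 2)]

lemma scaledPt_mem_Ioo {d : ℕ} (h0 : 0 < c d) (h2 : c d ≤ 2) : scaledPt c d ∈ Ioo 0 1 := by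
  have h4 : (4 : ℝ) ≤ 2 ^ (d + 2) := by
    calc (4 : ℝ) = 2 ^ 2 := by norm_num
      _ ≤ 2 ^ (d + 2) := pow_le_pow_right₀ one_le_two (by omega)
  refine ⟨?_, sub_lt_self _ (by positivity)⟩
  rw [scaledPt, sub_pos, div_lt_one (by positivity)]
  linarith

lemma isDyadic_scaledPt {d : ℕ} (h : IsDyadic (c d)) : IsDyadic (scaledPt c d) := by
  rw [scaledPt, div_eq_inv_mul, ← zpow_natCast, ← zpow_neg]
  exact isDyadic_one.sub (h.two_zpow_mul _)

lemma scaledPt_succ_eq {d : ℕ} (h : c (d + 1) = 2 * c' d) : scaledPt c (d + 1) = scaledPt c' d := by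
  rw [scaledPt, scaledPt, h, pow_succ 2 (d + 1 + 1)]
  field_simp

end ScaledPoints

lemma strictMono_scaledPt_one : StrictMono (scaledPt fun _ => 1) :=
  strictMono_scaledPt fun _ => by norm_num

noncomputable def orbitPt (d : ℕ) : unitInt :=
  ⟨scaledPt (fun _ => 1) d, Ioo_subset_Icc_self (scaledPt_mem_Ioo one_pos one_le_two)⟩

lemma coe_orbitPt (d : ℕ) : (orbitPt d : ℝ) = scaledPt (fun _ => 1) d := rfl

section WordFactors

variable {k : ℕ}

/-- Generator `i` will send `1 - 1 / 2 ^ (d + 2)` to `1 - c / 2 ^ (d + 2)`, where `c` is computed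
from the letters `prev` and `next` on either side of position `d` of the word: the factors `2`
and `1 / 2` realise the moves the word prescribes, `5 / 4` and `3 / 4` keep the map increasing
next to such a move. -/
noncomputable def letterFactor (i : Fin k) (prev next : Option (Fin k × Bool)) : ℝ :=
  if prev = some (i, true) then 2
  else if next = some (i, false) then 1 / 2
  else if next = some (i, true) then 5 / 4
  else if prev = some (i, false) then 3 / 4
  else 1

lemma letterFactor_pos (i : Fin k) (p x : Option (Fin k × Bool)) : 0 < letterFactor i p x := by
  unfold letterFactor
  split_ifs <;> norm_num

lemma letterFactor_le_two (i : Fin k) (p x : Option (Fin k × Bool)) :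
    letterFactor i p x ≤ 2 := by
  unfold letterFactor
  split_ifs <;> norm_num

lemma isDyadic_letterFactor (i : Fin k) (p x : Option (Fin k × Bool)) :
    IsDyadic (letterFactor i p x) := by
  unfold letterFactor
  split_ifs
  exacts [⟨2, 0, by norm_num⟩, ⟨1, 1, by norm_num⟩, ⟨5, 2, by norm_num⟩, ⟨3, 2, by norm_num⟩,
    ⟨1, 0, by norm_num⟩]

lemma letterFactor_lt_two_mul (i : Fin k) (p : Option (Fin k × Bool)) {x y : Option (Fin k × Bool)}
    (hxy : ∀ a ∈ x, ∀ b ∈ y, a.1 = b.1 → a.2 = b.2) :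
    letterFactor i x y < 2 * letterFactor i p x := by
  unfold letterFactor
  split_ifs <;> subst_vars <;> simp_all <;> norm_num

variable (L : List (Fin k × Bool)) (i : Fin k)

noncomputable def slotFactor : ℕ → ℝ
  | 0 => letterFactor i none L[0]?
  | d + 1 => letterFactor i L[d]? L[d + 1]?

lemma slotFactor_pos (d : ℕ) : 0 < slotFactor L i d := by
  cases d <;> exact letterFactor_pos ..

lemma slotFactor_le_two (d : ℕ) : slotFactor L i d ≤ 2 := by
  cases d <;> exact letterFactor_le_two ..

lemma isDyadic_slotFactor (d : ℕ) : IsDyadic (slotFactor L i d) := by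
  cases d <;> exact isDyadic_letterFactor ..

variable {L i}

lemma FreeGroup.IsReduced.getElem?_succ (hL : FreeGroup.IsReduced L) (j : ℕ) :
    ∀ a ∈ L[j]?, ∀ b ∈ L[j + 1]?, a.1 = b.1 → a.2 = b.2 := by
  intro a ha b hb
  obtain ⟨hj, rfl⟩ := List.getElem?_eq_some_iff.1 ha
  obtain ⟨hj1, rfl⟩ := List.getElem?_eq_some_iff.1 hb
  exact List.IsChain.getElem hL j hj1

lemma slotFactor_succ_lt (hL : FreeGroup.IsReduced L) (d : ℕ) :
    slotFactor L i (d + 1) < 2 * slotFactor L i d := by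
  cases d <;> exact letterFactor_lt_two_mul i _ (hL.getElem?_succ _)

lemma slotFactor_succ_of_getElem?_eq_true {j : ℕ} (h : L[j]? = some (i, true)) :
    slotFactor L i (j + 1) = 2 := by
  simp [slotFactor, letterFactor, h]

lemma slotFactor_of_getElem?_eq_false (hL : FreeGroup.IsReduced L) {j : ℕ}
    (h : L[j]? = some (i, false)) : slotFactor L i j = 1 / 2 := by
  cases j with
  | zero => simp [slotFactor, letterFactor, h]
  | succ j =>
    have hprev : L[j]? ≠ some (i, true) := fun hj =>
      Bool.noConfusion (hL.getElem?_succ j _ hj _ h rfl)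
    simp [slotFactor, letterFactor, h, hprev]

end WordFactors

section Word

variable {k : ℕ} {L : List (Fin k × Bool)}

lemma exists_isThompson_slotFactor (hL : FreeGroup.IsReduced L) (i : Fin k) :
    ∃ g : Equiv.Perm unitInt, IsThompson g ∧
      ∀ d ≤ L.length, (g (orbitPt d) : ℝ) = scaledPt (slotFactor L i) d := by
  obtain ⟨g, hg, hnode⟩ := exists_isThompson_interpolating_of_mem_Ioo
    (strictMono_scaledPt_one.strictMonoOn _)
    ((strictMono_scaledPt (slotFactor_succ_lt hL)).strictMonoOn _)
    (scaledPt_mem_Ioo one_pos one_le_two).1 (scaledPt_mem_Ioo one_pos one_le_two).2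
    (scaledPt_mem_Ioo (slotFactor_pos L i 0) (slotFactor_le_two L i 0)).1
    (scaledPt_mem_Ioo (slotFactor_pos L i _) (slotFactor_le_two L i _)).2
    (fun _ _ => isDyadic_scaledPt isDyadic_one)
    (fun d _ => isDyadic_scaledPt (isDyadic_slotFactor L i d))
  exact ⟨g, hg, fun d hd => hnode d hd (orbitPt d) rfl⟩

lemma cond_apply_orbitPt (hL : FreeGroup.IsReduced L) {g : Fin k → Equiv.Perm unitInt}
    (hg : ∀ i, ∀ d ≤ L.length, (g i (orbitPt d) : ℝ) = scaledPt (slotFactor L i) d)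
    {j : ℕ} (hj : j < L.length) :
    cond L[j].2 (g L[j].1) (g L[j].1)⁻¹ (orbitPt (j + 1)) = orbitPt j := by
  have hLj : L[j]? = some L[j] := List.getElem?_eq_getElem hj
  rcases hx : L[j] with ⟨i, _ | _⟩ <;> rw [hx] at hLj
  · rw [cond_false, Equiv.Perm.inv_eq_iff_eq]
    refine Subtype.ext ?_
    rw [hg i j hj.le, coe_orbitPt]
    refine scaledPt_succ_eq ?_
    rw [slotFactor_of_getElem?_eq_false hL hLj]
    norm_num
  · refine Subtype.ext ?_
    rw [cond_true, hg i (j + 1) hj, coe_orbitPt]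
    refine scaledPt_succ_eq ?_
    rw [slotFactor_succ_of_getElem?_eq_true hLj]
    norm_num

end Word

theorem thompson_no_group_law_general (k : ℕ) (w : FreeGroup (Fin k)) (hw : w ≠ 1) :
    ∃ f : Fin k → Equiv.Perm unitInt, (∀ i, IsThompson (f i)) ∧
      FreeGroup.lift f w ≠ 1 := by
  set L := w.toWord
  have hL : FreeGroup.IsReduced L := FreeGroup.isReduced_toWord
  have hlen : 0 < L.length := List.length_pos_iff.2 (by simpa [L] using hw)
  choose g hg hgL using exists_isThompson_slotFactor hL
  refine ⟨g, hg, fun h => ?_⟩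
  have hchain := prod_apply_eq_of_chain (L.map fun x => cond x.2 (g x.1) (g x.1)⁻¹) orbitPt
    fun j hj => by simpa using cond_apply_orbitPt hL hgL (by simpa using hj)
  rw [← FreeGroup.lift_mk, FreeGroup.mk_toWord, h, List.length_map] at hchain
  exact (strictMono_scaledPt_one hlen).ne (congrArg Subtype.val hchain).symm

/-- Thompson's group `F` satisfies no group law: for every `k ≥ 1` and every
nontrivial word `w` in the free group on `k` generators there exist elements
`f_1, …, f_k` of `F` whose evaluation `w(f_1, …, f_k)` is not the identity map
of `[0,1]`. -/
theorem thompson_no_group_law (k : ℕ) (hk : 1 ≤ k)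
    (w : FreeGroup (Fin k)) (hw : w ≠ 1) :
    ∃ f : Fin k → Equiv.Perm unitInt, (∀ i, IsThompson (f i)) ∧
      FreeGroup.lift f w ≠ 1 :=
  thompson_no_group_law_general k w hw
end

section
/- Let G be a compact Hausdorff topological group acting on a set X such that every point stabilizer is closed and G separates X. Then every point stabilizer G_x has Haar measure zero in G, and moreover for every finite subset Y ⊆ X and every x ∈ X \ Y, the stabilizer of x inside the compact group G_Y (the pointwise stabilizer of Y, a closed subgroup of G) is closed in G_Y and has measure zero with respect to the Haar probability measure of G_Y. -/
open MeasureTheory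

/-! By Steinhaus' theorem a measurable subgroup of positive Haar measure is open, hence of finite
index in a compact group, so a point whose stabilizer is not null has a finite orbit. Separation
excludes finite orbits of `G_Y` through points `x ∉ Y`: an element fixing `Y` and the rest of such
an orbit pointwise cannot move `x` anywhere. -/

open MulAction

theorem Subgroup.isOpen_of_haar_pos {G : Type*} [Group G] [TopologicalSpace G]
    [IsTopologicalGroup G] [LocallyCompactSpace G] [MeasurableSpace G] [BorelSpace G]
    (μ : Measure G) [μ.IsHaarMeasure] [μ.InnerRegular] (H : Subgroup G)
    (hH : MeasurableSet (H : Set G)) (hpos : 0 < μ H) : IsOpen (H : Set G) := by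
  -- Steinhaus: `H / H ⊆ H` is a neighbourhood of `1`.
  refine H.isOpen_of_mem_nhds (Filter.mem_of_superset
    (Measure.div_mem_nhds_one_of_haar_pos μ _ hH hpos) ?_)
  rintro _ ⟨a, ha, b, hb, rfl⟩
  exact H.div_mem ha hb

theorem MulAction.measure_stabilizer_eq_zero_of_infinite_orbit {G X : Type*} [Group G]
    [TopologicalSpace G] [IsTopologicalGroup G] [CompactSpace G] [MeasurableSpace G] [BorelSpace G]
    (μ : Measure G) [μ.IsHaarMeasure] [MulAction G X] {x : X}
    (hx : MeasurableSet (stabilizer G x : Set G)) (hinf : (orbit G x).Infinite) :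
    μ (stabilizer G x) = 0 := by
  by_contra hne
  have := (stabilizer G x).quotient_finite_of_isOpen
    ((stabilizer G x).isOpen_of_haar_pos μ hx (pos_iff_ne_zero.mpr hne))
  exact hinf (Finite.of_equiv _ (orbitEquivQuotientStabilizer G x).symm)

theorem isClosed_fixingSubgroup {G X : Type*} [Group G] [TopologicalSpace G] [MulAction G X]
    (hclosed : ∀ x : X, IsClosed (stabilizer G x : Set G)) (Y : Set X) :
    IsClosed (fixingSubgroup G Y : Set G) := by
  have : (fixingSubgroup G Y : Set G) = ⋂ y ∈ Y, (stabilizer G y : Set G) := by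
    ext g
    simp [mem_fixingSubgroup_iff]
  exact this ▸ isClosed_biInter fun y _ => hclosed y

namespace Separates

variable {G X : Type*} [Group G] [MulAction G X]

theorem infinite_orbit_fixingSubgroup (hsep : Separates G X) {Y : Finset X} {x : X} (hx : x ∉ Y) :
    (orbit (fixingSubgroup G (Y : Set X)) x).Infinite := by
  classical
  intro hfin
  obtain ⟨g, hgY, hgx⟩ := hsep (Y ∪ hfin.toFinset.erase x) x (by simp [hx])
  have hg : g ∈ fixingSubgroup G (Y : Set X) :=
    (mem_fixingSubgroup_iff G).mpr fun y hy => hgY y (Finset.mem_union_left _ hy)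
  have hgx_mem : g • x ∈ Y ∪ hfin.toFinset.erase x :=
    Finset.mem_union_right _ <| by
      simpa [hgx] using mem_orbit x (⟨g, hg⟩ : fixingSubgroup G (Y : Set X))
  exact hgx (smul_left_cancel g (hgY _ hgx_mem))

theorem infinite_orbit (hsep : Separates G X) (x : X) : (orbit G x).Infinite :=
  (hsep.infinite_orbit_fixingSubgroup (Finset.notMem_empty x)).mono (orbit_subgroup_subset _ _)

end Separates

theorem compact_separating_strongly_topological_general {G X : Type*} [Group G]
    [TopologicalSpace G] [IsTopologicalGroup G] [CompactSpace G]
    [MeasurableSpace G] [BorelSpace G]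
    (μ : Measure G) [μ.IsHaarMeasure]
    [MulAction G X]
    (hclosed : ∀ x : X, IsClosed {g : G | g • x = x})
    (hsep : Separates G X) :
    (∀ x : X, μ {g : G | g • x = x} = 0) ∧
    ∀ (Y : Finset X) (x : X), x ∉ Y →
      IsClosed {h : ↥(fixingSubgroup G (↑Y : Set X)) | (h : G) • x = x} ∧
      ∀ ν : Measure ↥(fixingSubgroup G (↑Y : Set X)),
        ν.IsHaarMeasure → IsProbabilityMeasure ν →
          ν {h : ↥(fixingSubgroup G (↑Y : Set X)) | (h : G) • x = x} = 0 := by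
  refine ⟨fun x => measure_stabilizer_eq_zero_of_infinite_orbit μ (hclosed x).measurableSet
    (hsep.infinite_orbit x), fun Y x hx => ?_⟩
  have hclosedY : IsClosed {h : ↥(fixingSubgroup G (↑Y : Set X)) | (h : G) • x = x} :=
    (hclosed x).preimage continuous_subtype_val
  refine ⟨hclosedY, fun ν _ _ => ?_⟩
  have : CompactSpace (fixingSubgroup G (Y : Set X)) :=
    isCompact_iff_compactSpace.mp (isClosed_fixingSubgroup hclosed (Y : Set X)).isCompact
  exact measure_stabilizer_eq_zero_of_infinite_orbit ν hclosedY.measurableSet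
    (hsep.infinite_orbit_fixingSubgroup hx)

/-- Let `G` be a compact Hausdorff topological group with Haar probability
measure `μ`, acting on a set `X` with closed point stabilizers and separating
`X`.  Then every point stabilizer is `μ`-null, and for every finite `Y ⊆ X` and
every `x ∉ Y` the stabilizer of `x` inside the compact group `G_Y` (the
pointwise stabilizer of `Y`) is closed in `G_Y` and is null for the Haar
probability measure of `G_Y`. -/
theorem compact_separating_strongly_topological {G X : Type*} [Group G]
    [TopologicalSpace G] [IsTopologicalGroup G] [CompactSpace G] [T2Space G]
    [MeasurableSpace G] [BorelSpace G]
    (μ : Measure G) [μ.IsHaarMeasure] [IsProbabilityMeasure μ]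
    [MulAction G X]
    (hclosed : ∀ x : X, IsClosed {g : G | g • x = x})
    (hsep : Separates G X) :
    (∀ x : X, μ {g : G | g • x = x} = 0) ∧
    ∀ (Y : Finset X) (x : X), x ∉ Y →
      IsClosed {h : ↥(fixingSubgroup G (↑Y : Set X)) | (h : G) • x = x} ∧
      ∀ ν : Measure ↥(fixingSubgroup G (↑Y : Set X)),
        ν.IsHaarMeasure → IsProbabilityMeasure ν →
          ν {h : ↥(fixingSubgroup G (↑Y : Set X)) | (h : G) • x = x} = 0 :=
  compact_separating_strongly_topological_general μ hclosed hsep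
end

section
/- Let d : ℕ → ℕ with d i ≥ 2 for all i, and let X = Π_{i:ℕ} Fin (d i) be the boundary of the spherically homogeneous rooted tree with valency sequence d. Let G be a group of tree automorphisms of X that is spherically transitive and such that for every n and every vertex v of level n, the rigid stabilizer of v in G contains a non-identity element. Then G separates X: for every finite subset Y ⊆ X and every x ∈ X \ Y there exists g ∈ G fixing every point of Y with g(x) ≠ x. -/
/-- A bijection `f` of the boundary `X = Π i, Fin (d i)` of the spherically
homogeneous rooted tree is a *tree automorphism* if for all `x y` and every
level `n`, `x` and `y` agree up to level `n` iff `f x` and `f y` do. -/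
def IsTreeAut {d : ℕ → ℕ} (f : (∀ i, Fin (d i)) → (∀ i, Fin (d i))) : Prop :=
  ∀ (x y : ∀ i, Fin (d i)) (n : ℕ),
    (∀ i < n, x i = y i) ↔ (∀ i < n, f x i = f y i)

/-- A point `x` of the boundary *passes through* the level-`n` vertex `v` if it
agrees with `v` up to level `n`. -/
def PassesThrough {d : ℕ → ℕ} {n : ℕ} (x : ∀ i, Fin (d i)) (v : ∀ i : Fin n, Fin (d i)) : Prop :=
  ∀ i : Fin n, x i = v i

/-!
Separate `x` from the finite set `Y` at some level `n`, and let `v` be the vertex of level `n`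
through `x`. A nontrivial element `h` of the rigid stabilizer of `v` moves some point `z`, which
must pass through `v`. Transitivity gives `t ∈ G` carrying `x` so close to `z` that `h` still
moves `t x`, while `t` maps every `y ∈ Y` off the subtree of `v`, where `h` acts trivially.
Hence `t⁻¹ * h * t` fixes `Y` and moves `x`.
-/

theorem exists_level_forall_exists_lt_ne {α : ℕ → Type*} (Y : Finset (∀ i, α i))
    {x : ∀ i, α i} (hx : x ∉ Y) : ∃ n, ∀ y ∈ Y, ∃ i < n, x i ≠ y i := by
  have hne : ∀ y ∈ Y, x ≠ y := fun y hy h => hx (h ▸ hy)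
  choose! idx hidx using fun y (hy : y ∈ Y) => Function.ne_iff.mp (hne y hy)
  exact ⟨Y.sup idx + 1, fun y hy =>
    ⟨idx y, Nat.lt_succ_of_le (Finset.le_sup hy), hidx y hy⟩⟩

section TreeAut

variable {d : ℕ → ℕ}

theorem IsTreeAut.exists_lt_apply_ne {f : (∀ i, Fin (d i)) → ∀ i, Fin (d i)}
    (hf : IsTreeAut f) {n : ℕ} {x y : ∀ i, Fin (d i)} (hxy : ∃ i < n, x i ≠ y i) :
    ∃ i < n, f x i ≠ f y i := by
  contrapose! hxy
  exact (hf x y n).mpr hxy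

theorem IsTreeAut.apply_ne_self_of_eq_of_le {f : (∀ i, Fin (d i)) → ∀ i, Fin (d i)}
    (hf : IsTreeAut f) {z w : ∀ i, Fin (d i)} {m : ℕ} (hz : f z m ≠ z m)
    (hwz : ∀ i ≤ m, w i = z i) : f w ≠ w := by
  intro hw
  have hfwz : f w m = f z m := (hf w z (m + 1)).mp (fun i hi => hwz i (Nat.le_of_lt_succ hi)) m
    m.lt_succ_self
  exact hz (by rw [← hfwz, hw, hwz m le_rfl])

theorem PassesThrough.of_apply_ne_self {n : ℕ} {v : ∀ i : Fin n, Fin (d i)}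
    {h : (∀ i, Fin (d i)) → ∀ i, Fin (d i)} (hh : ∀ x, ¬ PassesThrough x v → h x = x)
    {z : ∀ i, Fin (d i)} (hz : h z ≠ z) : PassesThrough z v :=
  not_not.mp (mt (hh z) hz)

theorem PassesThrough.not_passesThrough_of_exists_lt_ne {n : ℕ} {v : ∀ i : Fin n, Fin (d i)}
    {x y : ∀ i, Fin (d i)} (hx : PassesThrough x v) (hxy : ∃ i < n, x i ≠ y i) :
    ¬ PassesThrough y v := by
  intro hy
  obtain ⟨i, hi, hne⟩ := hxy
  exact hne ((hx ⟨i, hi⟩).trans (hy ⟨i, hi⟩).symm)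

end TreeAut

theorem Equiv.Perm.conj_apply_ne_self_iff {α : Type*} (t h : Equiv.Perm α) (x : α) :
    (t⁻¹ * h * t) x ≠ x ↔ h (t x) ≠ t x :=
  Equiv.Perm.inv_eq_iff_eq.not

theorem weaklyBranch_separates_general {d : ℕ → ℕ}
    (G : Subgroup (Equiv.Perm (∀ i, Fin (d i))))
    (haut : ∀ g ∈ G, IsTreeAut g)
    (htrans : ∀ (n : ℕ) (x y : ∀ i, Fin (d i)), ∃ g ∈ G, ∀ i < n, g x i = y i)
    (hrigid : ∀ (n : ℕ) (v : ∀ i : Fin n, Fin (d i)),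
      ∃ g ∈ G, g ≠ 1 ∧ ∀ x : ∀ i, Fin (d i), ¬ PassesThrough x v → g x = x) :
    ∀ (Y : Finset (∀ i, Fin (d i))) (x : ∀ i, Fin (d i)), x ∉ Y →
      ∃ g ∈ G, (∀ y ∈ Y, g y = y) ∧ g x ≠ x := by
  intro Y x hx
  obtain ⟨n, hsplit⟩ := exists_level_forall_exists_lt_ne Y hx
  obtain ⟨h, hG, hne, hfix⟩ := hrigid n fun i => x i
  obtain ⟨z, hz⟩ : ∃ z, h z ≠ z := not_forall.mp fun hc => hne (Equiv.ext hc)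
  have hzv := PassesThrough.of_apply_ne_self hfix hz
  obtain ⟨m, hm⟩ := Function.ne_iff.mp hz
  obtain ⟨t, htG, ht⟩ := htrans (max n (m + 1)) x z
  have htxv : PassesThrough (t x) fun i : Fin n => x i := fun i =>
    (ht i (lt_max_of_lt_left i.isLt)).trans (hzv i)
  refine ⟨t⁻¹ * h * t, mul_mem (mul_mem (inv_mem htG) hG) htG, fun y hy => ?_, ?_⟩
  · have hty :=
      htxv.not_passesThrough_of_exists_lt_ne ((haut t htG).exists_lt_apply_ne (hsplit y hy))
    simp [hfix _ hty]
  · exact (Equiv.Perm.conj_apply_ne_self_iff t h x).mpr <|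
      (haut h hG).apply_ne_self_of_eq_of_le hm fun i hi => ht i (lt_max_of_lt_right (by omega))

/-- Let `d : ℕ → ℕ` with `d i ≥ 2`, let `X = Π i, Fin (d i)` be the boundary of
the corresponding rooted tree, and let `G` be a group of tree automorphisms of
`X` which is spherically transitive and whose rigid vertex stabilizers are all
nontrivial (a weakly branch action).  Then `G` separates `X`: for every finite
`Y ⊆ X` and every `x ∉ Y` some `g ∈ G` fixes `Y` pointwise and moves `x`. -/
theorem weaklyBranch_separates {d : ℕ → ℕ} (hd : ∀ i, 2 ≤ d i)
    (G : Subgroup (Equiv.Perm (∀ i, Fin (d i))))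
    (haut : ∀ g ∈ G, IsTreeAut g)
    (htrans : ∀ (n : ℕ) (x y : ∀ i, Fin (d i)), ∃ g ∈ G, ∀ i < n, g x i = y i)
    (hrigid : ∀ (n : ℕ) (v : ∀ i : Fin n, Fin (d i)),
      ∃ g ∈ G, g ≠ 1 ∧ ∀ x : ∀ i, Fin (d i), ¬ PassesThrough x v → g x = x) :
    ∀ (Y : Finset (∀ i, Fin (d i))) (x : ∀ i, Fin (d i)), x ∉ Y →
      ∃ g ∈ G, (∀ y ∈ Y, g y = y) ∧ g x ≠ x :=
  weaklyBranch_separates_general G haut htrans hrigid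
end

section
/- Let G be a locally compact second-countable Hausdorff topological group, H ⊆ G a closed subgroup with right Haar measure λ, and K ⊆ H a closed subgroup with λ(K) = 0, carrying a right Haar measure μ_K. Let c_0 ∈ G and let X ⊆ Hc_0 be a set such that Xc_0^{-1} is Borel in H. Suppose that for λ-almost every h ∈ H, the set {k ∈ K : k·h·c_0 ∈ X} has μ_K-measure zero. Then λ(Xc_0^{-1}) = 0; that is, X has measure zero with respect to the natural extension of λ to the coset Hc_0. -/
/-!
Fubini on `H × K` for the set `{(h, k) | k * h * c₀ ∈ X}` swaps the order of the null conditions: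
for `μK`-almost every `k`, the left translate `k⁻¹ · (X c₀⁻¹)` is `lam`-null. Since `μK ≠ 0` such a
`k` exists, and left translations preserve the null sets of the right Haar measure `lam`.
-/

namespace MeasureTheory

open MeasureTheory.Measure

variable {G : Type*} [Group G] [MeasurableSpace G] [MeasurableMul₂ G] [MeasurableInv G]
  (μ : Measure G) [SFinite μ] [μ.IsMulRightInvariant]

theorem measure_mul_left_null (g : G) {s : Set G} :
    μ ((g * ·) ⁻¹' s) = 0 ↔ μ s = 0 := by
  have key := measure_mul_right_null μ.inv g⁻¹ (s := s⁻¹)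
  rw [inv_apply, inv_apply, inv_inv, ← Set.inv_preimage, Set.preimage_preimage] at key
  convert key using 3
  ext x
  simp only [Set.mem_preimage, Set.mem_inv, mul_inv_rev, inv_inv]

theorem measure_eq_zero_of_ae_measure_mul_mem_eq_zero {β : Type*} [MeasurableSpace β]
    {ν : Measure β} [SFinite ν] [NeZero ν] {φ : β → G} (hφ : Measurable φ) {s : Set G}
    (hs : MeasurableSet s) (h : ∀ᵐ g ∂μ, ν {b | φ b * g ∈ s} = 0) : μ s = 0 := by
  have hmeas : MeasurableSet {p : G × β | φ p.2 * p.1 ∉ s} :=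
    (hs.preimage ((hφ.comp measurable_snd).mul measurable_fst)).compl
  have hswap : ∀ᵐ b ∂ν, ∀ᵐ g ∂μ, φ b * g ∉ s :=
    (ae_ae_comm hmeas).1 (by simpa only [ae_iff, not_not] using h)
  obtain ⟨b, hb⟩ := hswap.exists
  simp only [ae_iff, not_not] at hb
  exact (measure_mul_left_null μ (φ b)).1 hb

end MeasureTheory

open MeasureTheory

theorem coset_fubini_null_general {G : Type*} [Group G] [TopologicalSpace G]
    [IsTopologicalGroup G] [LocallyCompactSpace G] [SecondCountableTopology G]
    [MeasurableSpace G] [BorelSpace G]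
    (H : Subgroup G) (hH : IsClosed (H : Set G))
    (lam : Measure ↥H) [lam.IsMulRightInvariant] [IsFiniteMeasureOnCompacts lam]
    (K : Subgroup G) (hKH : K ≤ H) (hK : IsClosed (K : Set G))
    (μK : Measure ↥K) [IsFiniteMeasureOnCompacts μK]
    [μK.IsOpenPosMeasure]
    (c₀ : G) (X : Set G)
    (hXmeas : MeasurableSet {h : ↥H | (h : G) * c₀ ∈ X})
    (hsection : ∀ᵐ h : ↥H ∂lam, μK {k : ↥K | (k : G) * (h : G) * c₀ ∈ X} = 0) :
    lam {h : ↥H | (h : G) * c₀ ∈ X} = 0 := by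
  -- these make `H` a measurable group and `lam`, `μK` σ-finite
  have : BorelSpace H := Subtype.borelSpace _
  have : BorelSpace K := Subtype.borelSpace _
  have : SecondCountableTopology H := TopologicalSpace.Subtype.secondCountableTopology _
  have : SecondCountableTopology K := TopologicalSpace.Subtype.secondCountableTopology _
  have : LocallyCompactSpace H := hH.locallyCompactSpace
  have : LocallyCompactSpace K := hK.locallyCompactSpace
  have hinclusion : Measurable (Subgroup.inclusion hKH) :=
    (continuous_subtype_val.subtype_mk _).measurable
  exact measure_eq_zero_of_ae_measure_mul_mem_eq_zero lam hinclusion hXmeas hsection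

/-- Fubini-type lemma for cosets.  Let `G` be a locally compact second-countable
Hausdorff group, `H ≤ G` a closed subgroup with right Haar measure `lam`, and
`K ≤ H` a closed subgroup with `lam K = 0`, carrying a right Haar measure `μK`.
Let `c₀ ∈ G` and let `X` be a subset of the right coset `H·c₀` such that
`X·c₀⁻¹` is Borel in `H`.  If for `lam`-almost every `h ∈ H` the right `K`-coset
section `{k ∈ K : k·h·c₀ ∈ X}` is `μK`-null, then `X` is null with respect to
the natural extension of `lam` to the coset `H·c₀`, i.e. `lam (X·c₀⁻¹) = 0`. -/
theorem coset_fubini_null {G : Type*} [Group G] [TopologicalSpace G]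
    [IsTopologicalGroup G] [LocallyCompactSpace G] [SecondCountableTopology G] [T2Space G]
    [MeasurableSpace G] [BorelSpace G]
    (H : Subgroup G) (hH : IsClosed (H : Set G))
    (lam : Measure ↥H) [lam.IsMulRightInvariant] [IsFiniteMeasureOnCompacts lam]
    [lam.IsOpenPosMeasure]
    (K : Subgroup G) (hKH : K ≤ H) (hK : IsClosed (K : Set G))
    (hKnull : lam {h : ↥H | (h : G) ∈ K} = 0)
    (μK : Measure ↥K) [μK.IsMulRightInvariant] [IsFiniteMeasureOnCompacts μK]
    [μK.IsOpenPosMeasure]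
    (c₀ : G) (X : Set G) (hX : X ⊆ {g : G | ∃ h ∈ H, g = h * c₀})
    (hXmeas : MeasurableSet {h : ↥H | (h : G) * c₀ ∈ X})
    (hsection : ∀ᵐ h : ↥H ∂lam, μK {k : ↥K | (k : G) * (h : G) * c₀ ∈ X} = 0) :
    lam {h : ↥H | (h : G) * c₀ ∈ X} = 0 :=
  coset_fubini_null_general H hH lam K hKH hK μK c₀ X hXmeas hsection
end

section
/- Let G be a finite group acting on a nonempty finite set X, and let n, a be positive integers with n < a such that for every subset Y ⊆ X with |Y| ≤ n, every orbit of the pointwise stabilizer G_Y on X \ Y has size at least a. Let w be a nontrivial reduced word of length n in the free group on k generators. Then the number of tuples (g_1, …, g_k) ∈ G^k with w(g_1, …, g_k) ≠ 1 is at least (1 − n/a)^n · |G|^k; equivalently, the probability that w is not satisfied by a uniformly random k-tuple of elements of G is at least (1 − n/a)^n. -/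
/-!
Fix a base point `x₀` and follow its trajectory along the reduced word `w`, applying the
letters from right to left. A tuple whose trajectory never revisits a point does not satisfy `w`,
since the trajectory does not close up. Extending a suffix `t` of `w` by a letter `c` keeps the
trajectory injective for at least a fraction `1 - n/a` of the tuples: multiplying the value of
`c` on the left by an element `s` fixing the endpoints of the earlier `c`-steps does not change
the trajectory along `t` and moves the new point `x` to `s • x`. Because `w` is reduced, `x` is
not one of those at most `n` fixed points, so by separation its orbit under their pointwise
stabiliser has at least `a` points, and `s • x` lands on one of the at most `n` earlier points
with probability at most `n/a`. A weighted double count over the switches turns this local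
bound into a bound on the number of tuples.
-/

open Finset MulAction

theorem card_filter_smul_mem_mul_ncard_orbit_le {K X : Type*} [Group K] [Fintype K]
    [MulAction K X] [DecidableEq X] (x : X) (P : Finset X) :
    #{s : K | s • x ∈ P} * (orbit K x).ncard ≤ #P * Fintype.card K := by
  have fiber_le : ∀ z, #{s : K | s • x = z} ≤ Nat.card (stabilizer K x) := by
    intro z
    rcases Finset.eq_empty_or_nonempty {s : K | s • x = z} with h | ⟨s₀, hs₀⟩
    · simp [h]
    rw [← Set.ncard_coe_finset, ← Nat.card_coe_set_eq]
    refine Nat.card_le_card_of_injective (fun s => ⟨s₀⁻¹ * s.1, ?_⟩) fun s s' h => ?_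
    · have hs := s.2
      simp only [coe_filter, mem_univ, true_and, Set.mem_ofPred_eq] at hs
      simp [mul_smul, hs, ← (mem_filter.mp hs₀).2]
    · exact Subtype.ext (mul_left_cancel (congrArg Subtype.val h))
  have hfib : #{s : K | s • x ∈ P} = ∑ z ∈ P, #{s : K | s • x = z} := by
    rw [card_eq_sum_card_fiberwise (s := {s : K | s • x ∈ P}) (f := (· • x)) (t := P)
      fun s hs => (mem_filter.mp hs).2]
    refine sum_congr rfl fun z hz => congrArg card ?_
    ext s; simp +contextual [hz]
  calc #{s : K | s • x ∈ P} * (orbit K x).ncard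
      ≤ (#P * Nat.card (stabilizer K x)) * (orbit K x).ncard := by
        gcongr
        simpa [hfib] using sum_le_card_nsmul P _ _ fun z _ => fiber_le z
    _ = #P * Fintype.card K := by
        rw [mul_assoc, ← index_stabilizer, Subgroup.card_mul_index, Nat.card_eq_fintype_card]

theorem Subgroup.natCard_subtype_eq_card_filter {G : Type*} [Group G] [Fintype G]
    (H : Subgroup G) (p : G → Prop) [DecidablePred (· ∈ H)] [DecidablePred p] :
    Nat.card {s : H // p s} = #{s | s ∈ H ∧ p s} := by
  rw [Nat.card_congr (Equiv.subtypeSubtypeEquivSubtypeInter (· ∈ H) p), Nat.card_eq_fintype_card,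
    Fintype.card_subtype]

section Switching

variable {G T : Type*} [Group G] [Fintype G] (ρ : G →* Equiv.Perm T) (H : T → Subgroup G)
  {A B : Finset T}

/-- Double counting of the pairs `(g, s)` with `s ∈ H g`, each weighted by `1 / |H g|`, along the
bijection `(g, s) ↦ (ρ s g, s)`. -/
theorem sum_natCard_div_eq_card (hH : ∀ g, ∀ s ∈ H g, H (ρ s g) = H g)
    (hBA : ∀ h ∈ B, ∀ s ∈ H h, ρ s h ∈ A) :
    ∑ g ∈ A, (Nat.card {s : H g // ρ s g ∈ B} : ℝ) / Nat.card (H g) = #B := by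
  classical
  have weight (g : T) (p : G → Prop) [DecidablePred p] :
      (Nat.card {s : H g // p s} : ℝ) / Nat.card (H g) =
        ∑ s, if s ∈ H g ∧ p s then (Nat.card (H g) : ℝ)⁻¹ else 0 := by
    rw [← sum_filter, sum_const, nsmul_eq_mul, div_eq_mul_inv,
      Subgroup.natCard_subtype_eq_card_filter]
  calc ∑ g ∈ A, (Nat.card {s : H g // ρ s g ∈ B} : ℝ) / Nat.card (H g)
      = ∑ p ∈ A ×ˢ univ with p.2 ∈ H p.1 ∧ ρ p.2 p.1 ∈ B,
          (Nat.card (H p.1) : ℝ)⁻¹ := by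
        rw [sum_filter, sum_product]
        exact sum_congr rfl fun g _ => weight g (ρ · g ∈ B)
    _ = ∑ p ∈ B ×ˢ univ with p.2 ∈ H p.1, (Nat.card (H p.1) : ℝ)⁻¹ := by
        refine sum_nbij' (fun p => (ρ p.2 p.1, p.2)) (fun p => (ρ p.2⁻¹ p.1, p.2))
          ?_ ?_ ?_ ?_ ?_
        · rintro ⟨g, s⟩ hp
          simp only [mem_filter, mem_product, mem_univ, and_true] at hp ⊢
          exact ⟨hp.2.2, hH g s hp.2.1 ▸ hp.2.1⟩
        · rintro ⟨h, s⟩ hp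
          simp only [mem_filter, mem_product, mem_univ, and_true] at hp ⊢
          have hs : s⁻¹ ∈ H h := inv_mem hp.2
          refine ⟨hBA h hp.1 _ hs, hH h _ hs ▸ hp.2, ?_⟩
          simpa [map_inv] using hp.1
        · rintro ⟨g, s⟩ -
          simp
        · rintro ⟨h, s⟩ -
          simp
        · rintro ⟨g, s⟩ hp
          simp only [mem_filter] at hp
          rw [hH g s hp.2.1]
    _ = ∑ h ∈ B, 1 := by
        rw [sum_filter, sum_product]
        refine sum_congr rfl fun h _ => ?_
        dsimp only
        rw [← sum_filter, sum_const, nsmul_eq_mul, ← Fintype.card_subtype,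
          ← Nat.card_eq_fintype_card, mul_inv_cancel₀ (mod_cast Nat.card_pos.ne')]
    _ = #B := by simp

theorem mul_card_le_card_of_switching (hH : ∀ g, ∀ s ∈ H g, H (ρ s g) = H g)
    (hBA : ∀ h ∈ B, ∀ s ∈ H h, ρ s h ∈ A) {r : ℝ}
    (hr : ∀ g ∈ A, r * Nat.card (H g) ≤ Nat.card {s : H g // ρ s g ∈ B}) :
    r * #A ≤ #B :=
  calc r * #A = ∑ g ∈ A, r := by rw [sum_const, nsmul_eq_mul, mul_comm]
    _ ≤ ∑ g ∈ A, (Nat.card {s : H g // ρ s g ∈ B} : ℝ) / Nat.card (H g) :=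
      sum_le_sum fun g hg => (le_div_iff₀ (mod_cast Nat.card_pos)).2 (hr g hg)
    _ = #B := sum_natCard_div_eq_card ρ H hH hBA

end Switching

def SeparatesInOrder (G X : Type*) [Group G] [MulAction G X] (n a : ℕ) : Prop :=
  ∀ Y : Finset X, Y.card ≤ n → ∀ x : X, x ∉ Y →
    a ≤ {z : X | ∃ g : G, (∀ y ∈ Y, g • y = y) ∧ g • x = z}.ncard

lemma SeparatesInOrder.le_ncard_orbit {G X : Type*} [Group G] [MulAction G X] {n a : ℕ}
    (h : SeparatesInOrder G X n a) {Y : Finset X} (hY : #Y ≤ n) {x : X} (hx : x ∉ Y) :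
    a ≤ (orbit (fixingSubgroup G (Y : Set X)) x).ncard := by
  convert h Y hY x hx using 2
  ext z
  simp [mem_orbit_iff, mem_fixingSubgroup_iff]

namespace WordMap

variable {G X ι : Type*} [Group G] [MulAction G X]

def letterValue (g : ι → G) (c : ι × Bool) : G := cond c.2 (g c.1) (g c.1)⁻¹

def wordValue (g : ι → G) (t : List (ι × Bool)) : G := (t.map (letterValue g)).prod

@[simp] lemma wordValue_nil (g : ι → G) : wordValue g [] = 1 := rfl

@[simp] lemma wordValue_cons (g : ι → G) (c : ι × Bool) (t : List (ι × Bool)) :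
    wordValue g (c :: t) = letterValue g c * wordValue g t := List.prod_cons

lemma letterValue_flip (g : ι → G) (c : ι × Bool) :
    letterValue g (c.1, !c.2) = (letterValue g c)⁻¹ := by
  obtain ⟨i, b⟩ := c
  cases b <;> simp [letterValue]

lemma lift_mk_eq_wordValue (g : ι → G) (t : List (ι × Bool)) :
    FreeGroup.lift g (FreeGroup.mk t) = wordValue g t := FreeGroup.lift_mk

def trajectory (x₀ : X) (g : ι → G) (t : List (ι × Bool)) : List X :=
  t.tails.map (wordValue g · • x₀)

lemma trajectory_cons (x₀ : X) (g : ι → G) (c : ι × Bool) (t : List (ι × Bool)) :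
    trajectory x₀ g (c :: t) = (wordValue g (c :: t) • x₀) :: trajectory x₀ g t := rfl

lemma length_trajectory (x₀ : X) (g : ι → G) (t : List (ι × Bool)) :
    (trajectory x₀ g t).length = t.length + 1 := by
  simp [trajectory]

lemma eq_of_smul_eq_of_nodup_trajectory {x₀ : X} {g : ι → G} {t u v : List (ι × Bool)}
    (hnd : (trajectory x₀ g t).Nodup) (hu : u <:+ t) (hv : v <:+ t)
    (h : wordValue g u • x₀ = wordValue g v • x₀) : u = v :=
  List.inj_on_of_nodup_map hnd ((List.mem_tails _ _).2 hu) ((List.mem_tails _ _).2 hv) h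

lemma wordValue_ne_one_of_nodup_trajectory {x₀ : X} {g : ι → G} {t : List (ι × Bool)}
    (hnd : (trajectory x₀ g t).Nodup) (ht : t ≠ []) : wordValue g t ≠ 1 := fun h =>
  ht <| eq_of_smul_eq_of_nodup_trajectory hnd (List.suffix_refl t) List.nil_suffix (by simp [h])

section Switch

variable [DecidableEq ι]

def switch (c : ι × Bool) (s : G) (g : ι → G) : ι → G :=
  Function.update g c.1 (cond c.2 (s * g c.1) (g c.1 * s⁻¹))

lemma switch_one (c : ι × Bool) (g : ι → G) : switch c 1 g = g := by
  obtain ⟨i, b⟩ := c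
  cases b <;> simp [switch]

lemma switch_switch (c : ι × Bool) (s r : G) (g : ι → G) :
    switch c s (switch c r g) = switch c (s * r) g := by
  obtain ⟨i, b⟩ := c
  cases b <;> simp [switch, mul_assoc]

def switchHom (c : ι × Bool) : G →* Equiv.Perm (ι → G) where
  toFun s :=
    { toFun := switch c s
      invFun := switch c s⁻¹
      left_inv g := by simp [switch_switch, switch_one]
      right_inv g := by simp [switch_switch, switch_one] }
  map_one' := Equiv.ext (switch_one c)
  map_mul' s r := Equiv.ext fun g => (switch_switch c s r g).symm

@[simp] lemma switchHom_apply (c : ι × Bool) (s : G) (g : ι → G) :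
    switchHom c s g = switch c s g := rfl

lemma letterValue_switch (c : ι × Bool) (s : G) (g : ι → G) (d : ι × Bool) :
    letterValue (switch c s g) d =
      if d = c then s * letterValue g d
      else if d = (c.1, !c.2) then letterValue g d * s⁻¹ else letterValue g d := by
  obtain ⟨i, b⟩ := c
  obtain ⟨j, e⟩ := d
  by_cases hj : j = i
  · subst hj
    cases b <;> cases e <;> simp [letterValue, switch]
  · simp [letterValue, switch, hj]

variable [DecidableEq X]

/-- The points of the trajectory along `t` reached by a step with the letter `c`, a step with
`c⁻¹` counting as a `c`-step read backwards. Multiplying the value of `c` on the left by an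
element fixing them does not change the trajectory. -/
def forcedPoints (x₀ : X) (g : ι → G) (c : ι × Bool) : List (ι × Bool) → Finset X
  | [] => ∅
  | d :: t => (if d = c then {wordValue g (d :: t) • x₀}
      else if d = (c.1, !c.2) then {wordValue g t • x₀} else ∅) ∪ forcedPoints x₀ g c t

variable {x₀ : X} {g : ι → G} {c : ι × Bool} {s : G} {t : List (ι × Bool)}

lemma card_forcedPoints_le : #(forcedPoints x₀ g c t) ≤ t.length := by
  induction t with
  | nil => simp [forcedPoints]
  | cons d t ih =>
    refine (card_union_le _ _).trans ?_
    have : #(if d = c then {wordValue g (d :: t) • x₀}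
        else if d = (c.1, !c.2) then {wordValue g t • x₀} else (∅ : Finset X)) ≤ 1 := by
      split_ifs <;> simp
    simp only [List.length_cons]
    omega

lemma forcedPoints_subset_of_suffix {u : List (ι × Bool)} (h : u <:+ t) :
    forcedPoints x₀ g c u ⊆ forcedPoints x₀ g c t := by
  obtain ⟨v, rfl⟩ := h
  induction v with
  | nil => exact subset_rfl
  | cons d v ih => exact ih.trans subset_union_right

lemma wordValue_switch_smul (hs : ∀ q ∈ forcedPoints x₀ g c t, s • q = q) :
    wordValue (switch c s g) t • x₀ = wordValue g t • x₀ := by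
  induction t with
  | nil => simp
  | cons d t ih =>
    have hd := hs (wordValue g (d :: t) • x₀)
    have ht := hs (wordValue g t • x₀)
    simp only [forcedPoints, mem_union] at hd ht
    simp only [wordValue_cons, mul_smul] at hd ⊢
    rw [ih fun q hq => hs q (mem_union_right _ hq), letterValue_switch]
    split_ifs at hd ht ⊢ with hc hc'
    · rw [mul_smul, hd (by simp)]
    · rw [mul_smul, inv_smul_eq_iff.2 (ht (by simp)).symm]
    · rfl

lemma wordValue_switch_cons_smul (hs : ∀ q ∈ forcedPoints x₀ g c t, s • q = q) :
    wordValue (switch c s g) (c :: t) • x₀ = s • wordValue g (c :: t) • x₀ := by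
  rw [wordValue_cons, mul_smul, wordValue_switch_smul hs, letterValue_switch, if_pos rfl, mul_smul,
    wordValue_cons, mul_smul]

lemma trajectory_switch (hs : ∀ q ∈ forcedPoints x₀ g c t, s • q = q) :
    trajectory x₀ (switch c s g) t = trajectory x₀ g t :=
  List.map_congr_left fun _ hu => wordValue_switch_smul fun q hq =>
    hs q (forcedPoints_subset_of_suffix ((List.mem_tails _ _).1 hu) hq)

lemma forcedPoints_switch (hs : ∀ q ∈ forcedPoints x₀ g c t, s • q = q) :
    forcedPoints x₀ (switch c s g) c t = forcedPoints x₀ g c t := by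
  induction t with
  | nil => rfl
  | cons d t ih =>
    have hs' : ∀ q ∈ forcedPoints x₀ g c t, s • q = q := fun q hq =>
      hs q (mem_union_right _ hq)
    rw [forcedPoints, forcedPoints, ih hs', wordValue_switch_smul hs, wordValue_switch_smul hs']

lemma exists_suffix_of_mem_forcedPoints {q : X}
    (hq : q ∈ forcedPoints x₀ g c t) :
    ∃ d u, d :: u <:+ t ∧ (d = c ∧ q = wordValue g (d :: u) • x₀ ∨
      d = (c.1, !c.2) ∧ q = wordValue g u • x₀) := by
  induction t with
  | nil => simp [forcedPoints] at hq
  | cons d t ih =>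
    rcases mem_union.1 hq with hq | hq
    · refine ⟨d, t, List.suffix_refl _, ?_⟩
      split_ifs at hq with hc hc' <;> simp_all
    · obtain ⟨d', u, hu, h⟩ := ih hq
      exact ⟨d', u, hu.trans (List.suffix_cons d t), h⟩

lemma smul_notMem_forcedPoints (hnd : (trajectory x₀ g t).Nodup)
    (hred : FreeGroup.IsReduced (c :: t)) :
    wordValue g (c :: t) • x₀ ∉ forcedPoints x₀ g c t := by
  intro hq
  obtain ⟨d, u, hu, ⟨rfl, h⟩ | ⟨rfl, h⟩⟩ := exists_suffix_of_mem_forcedPoints hq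
  · simp only [wordValue_cons, mul_smul, smul_left_cancel_iff] at h
    have := eq_of_smul_eq_of_nodup_trajectory hnd (List.suffix_refl t)
      ((List.suffix_cons _ _).trans hu) h
    subst this
    simpa using hu.length_le
  · have : wordValue g ((c.1, !c.2) :: u) • x₀ = wordValue g t • x₀ := by
      rw [wordValue_cons, mul_smul, ← h, letterValue_flip, wordValue_cons, mul_smul,
        inv_smul_smul]
    obtain rfl := eq_of_smul_eq_of_nodup_trajectory hnd hu (List.suffix_refl _) this
    simp at hred

end Switch

section Counting

variable [Fintype G] [Fintype ι] [DecidableEq ι] [DecidableEq X]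

def selfAvoiding (x₀ : X) (t : List (ι × Bool)) : Finset (ι → G) :=
  {g | (trajectory x₀ g t).Nodup}

@[simp] lemma mem_selfAvoiding {x₀ : X} {t : List (ι × Bool)} {g : ι → G} :
    g ∈ selfAvoiding x₀ t ↔ (trajectory x₀ g t).Nodup := by
  simp [selfAvoiding]

variable {n a : ℕ} {x₀ : X}

lemma mul_natCard_le_natCard_switch_mem (hsep : SeparatesInOrder G X n a) (hna : n < a)
    {c : ι × Bool} {t : List (ι × Bool)} (hlen : t.length < n)
    (hred : FreeGroup.IsReduced (c :: t)) {g : ι → G}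
    (hg : (trajectory x₀ g t).Nodup) :
    (1 - (n : ℝ) / a) * Nat.card (fixingSubgroup G (forcedPoints x₀ g c t : Set X)) ≤
      Nat.card {s : fixingSubgroup G (forcedPoints x₀ g c t : Set X) //
        switch c (s : G) g ∈ selfAvoiding x₀ (c :: t)} := by
  classical
  set H := fixingSubgroup G (forcedPoints x₀ g c t : Set X)
  set x := wordValue g (c :: t) • x₀
  set P := (trajectory x₀ g t).toFinset
  have hgood : Nat.card {s : H // switch c (s : G) g ∈ selfAvoiding x₀ (c :: t)} =
      #{s : H | s • x ∉ P} := by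
    rw [Nat.card_eq_fintype_card, Fintype.card_subtype]
    congr 1
    ext ⟨s, hs⟩
    rw [mem_fixingSubgroup_iff] at hs
    simp only [mem_filter, mem_univ, true_and, mem_selfAvoiding, trajectory_cons,
      wordValue_switch_cons_smul hs, trajectory_switch hs, List.nodup_cons, hg, and_true,
      List.mem_toFinset, Subgroup.smul_def, x, P]
  have horbit : a ≤ (orbit H x).ncard :=
    hsep.le_ncard_orbit (card_forcedPoints_le.trans hlen.le) (smul_notMem_forcedPoints hg hred)
  have hbad := card_filter_smul_mem_mul_ncard_orbit_le (K := H) x P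
  have hP : #P ≤ n := (List.toFinset_card_le _).trans (by rw [length_trajectory]; omega)
  have hsplit := card_filter_add_card_filter_not (s := (univ : Finset H)) (· • x ∈ P)
  have ha : (0 : ℝ) < a := by exact_mod_cast (Nat.zero_le n).trans_lt hna
  have hbad' : (#{s : H | s • x ∈ P} : ℝ) ≤ n * Fintype.card H / a := by
    rw [le_div_iff₀ ha]
    exact_mod_cast (Nat.mul_le_mul_left _ horbit).trans (hbad.trans (Nat.mul_le_mul_right _ hP))
  rw [hgood, Nat.card_eq_fintype_card]
  calc (1 - (n : ℝ) / a) * Fintype.card H = Fintype.card H - n * Fintype.card H / a := by ring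
    _ ≤ Fintype.card H - #{s : H | s • x ∈ P} := by linarith
    _ = #{s : H | s • x ∉ P} := by rw [← card_univ, ← hsplit]; push_cast; ring

theorem mul_card_selfAvoiding_le (hsep : SeparatesInOrder G X n a) (hna : n < a)
    {c : ι × Bool} {t : List (ι × Bool)} (hlen : t.length < n)
    (hred : FreeGroup.IsReduced (c :: t)) :
    (1 - (n : ℝ) / a) * #(selfAvoiding (G := G) x₀ t) ≤
      #(selfAvoiding (G := G) x₀ (c :: t)) := by
  refine mul_card_le_card_of_switching (switchHom c)
    (fun g => fixingSubgroup G (forcedPoints x₀ g c t : Set X)) (fun g s hs => ?_)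
    (fun h hh s hs => ?_) (fun g hg => ?_)
  · rw [switchHom_apply, forcedPoints_switch ((mem_fixingSubgroup_iff G).1 hs)]
  · simp only [mem_selfAvoiding, trajectory_cons, List.nodup_cons] at hh ⊢
    rw [switchHom_apply, trajectory_switch ((mem_fixingSubgroup_iff G).1 hs)]
    exact hh.2
  · exact mul_natCard_le_natCard_switch_mem hsep hna hlen hred (mem_selfAvoiding.1 hg)

theorem pow_mul_card_le_card_selfAvoiding (hsep : SeparatesInOrder G X n a) (hna : n < a)
    {t : List (ι × Bool)} (hred : FreeGroup.IsReduced t) (hlen : t.length ≤ n) :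
    (1 - (n : ℝ) / a) ^ t.length * (Fintype.card G : ℝ) ^ Fintype.card ι ≤
      #(selfAvoiding (G := G) x₀ t) := by
  induction t with
  | nil => simp [selfAvoiding, trajectory]
  | cons c t ih =>
    have hna' : 0 ≤ 1 - (n : ℝ) / a := by
      rw [sub_nonneg, div_le_one (by exact_mod_cast (Nat.zero_le n).trans_lt hna)]
      exact_mod_cast hna.le
    calc (1 - (n : ℝ) / a) ^ (c :: t).length * (Fintype.card G : ℝ) ^ Fintype.card ι
        = (1 - (n : ℝ) / a) *
            ((1 - (n : ℝ) / a) ^ t.length * Fintype.card G ^ Fintype.card ι) := by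
          rw [List.length_cons, pow_succ]; ring
      _ ≤ (1 - (n : ℝ) / a) * #(selfAvoiding (G := G) x₀ t) :=
          mul_le_mul_of_nonneg_left (ih (hred.infix (List.suffix_cons c t).isInfix)
            (by simp at hlen; omega)) hna'
      _ ≤ #(selfAvoiding (G := G) x₀ (c :: t)) := mul_card_selfAvoiding_le hsep hna hlen hred

end Counting

end WordMap

theorem finite_separating_word_probability_general {G X : Type*} [Group G] [Fintype G]
    [Nonempty X] [MulAction G X]
    (n a : ℕ) (hna : n < a)
    (hsep : ∀ Y : Finset X, Y.card ≤ n → ∀ x : X, x ∉ Y →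
      a ≤ {z : X | ∃ g : G, (∀ y ∈ Y, g • y = y) ∧ g • x = z}.ncard)
    {k : ℕ} (w : FreeGroup (Fin k)) (hw : w ≠ 1)
    (hlen : (FreeGroup.toWord w).length = n) :
    (1 - (n : ℝ) / a) ^ n * (Fintype.card G : ℝ) ^ k ≤
      Nat.card {g : Fin k → G // FreeGroup.lift g w ≠ 1} := by
  classical
  obtain ⟨x₀⟩ := ‹Nonempty X›
  have hbound := WordMap.pow_mul_card_le_card_selfAvoiding (G := G) (x₀ := x₀) hsep hna
    FreeGroup.isReduced_toWord hlen.le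
  rw [hlen, Fintype.card_fin] at hbound
  refine hbound.trans ?_
  rw [Nat.card_eq_fintype_card, Fintype.card_subtype]
  refine mod_cast card_le_card fun g hg => mem_filter.2 ⟨mem_univ g, ?_⟩
  rw [← FreeGroup.mk_toWord (x := w), WordMap.lift_mk_eq_wordValue]
  exact WordMap.wordValue_ne_one_of_nodup_trajectory (WordMap.mem_selfAvoiding.1 hg)
    (FreeGroup.toWord_eq_nil_iff.not.2 hw)

/-- Let `G` be a finite group acting on a nonempty finite set `X`, separating
`X` in order `(n, a)` (with `0 < n < a`): for every `Y ⊆ X` with `|Y| ≤ n`,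
every orbit of the pointwise stabilizer `G_Y` on `X \ Y` has size at least `a`.
Then for every nontrivial reduced word `w` of length `n` on `k` generators, the
number of `k`-tuples `(g_1, …, g_k) ∈ G^k` with `w(g_1, …, g_k) ≠ 1` is at
least `(1 - n/a)^n · |G|^k`. -/
theorem finite_separating_word_probability {G X : Type*} [Group G] [Fintype G]
    [Fintype X] [Nonempty X] [MulAction G X]
    (n a : ℕ) (hn : 0 < n) (ha : 0 < a) (hna : n < a)
    (hsep : ∀ Y : Finset X, Y.card ≤ n → ∀ x : X, x ∉ Y →
      a ≤ {z : X | ∃ g : G, (∀ y ∈ Y, g • y = y) ∧ g • x = z}.ncard)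
    {k : ℕ} (w : FreeGroup (Fin k)) (hw : w ≠ 1)
    (hlen : (FreeGroup.toWord w).length = n) :
    (1 - (n : ℝ) / a) ^ n * (Fintype.card G : ℝ) ^ k ≤
      Nat.card {g : Fin k → G // FreeGroup.lift g w ≠ 1} :=
  finite_separating_word_probability_general n a hna hsep w hw hlen
end

section
/- Let G be a Hausdorff topological group acting on a set X, let x_0 ∈ X be a point whose stabilizer G_{x_0} is closed in G, and let w = v_1 ⋯ v_n be a reduced word in the free group on k generators. Then the set of tuples (g_1, …, g_k) ∈ G^k for which the trajectory points x_0, x_1, …, x_n of x_0 under (w, (g_1,…,g_k)) are pairwise distinct is an open subset of G^k (with the product topology). -/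
/-!
The equation `x_i = x_j` says that `w_i(g)⁻¹ * w_j(g)` lies in the stabilizer of `x₀`, where
`w_j` is the prefix of length `j` of the word. Word maps are continuous and the stabilizer
is closed, so each such equation cuts out a closed set of tuples, and the set in question is a
finite intersection of their complements.
-/

def prefixEval {G : Type*} [Group G] {k : ℕ} (v : ℕ → Fin k × Bool) (g : Fin k → G) : ℕ → G
  | 0 => 1
  | j + 1 => letterEval g (v j) * prefixEval v g j

section

variable {G : Type*} [Group G] {k : ℕ}

theorem traj_eq_prefixEval_smul {X : Type*} [MulAction G X] (g : Fin k → G)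
    (v : ℕ → Fin k × Bool) (x₀ : X) (j : ℕ) : traj g v x₀ j = prefixEval v g j • x₀ := by
  induction j with
  | zero => simp [traj, prefixEval]
  | succ j ih => simp [traj, prefixEval, ih, mul_smul]

variable [TopologicalSpace G] [IsTopologicalGroup G]

theorem continuous_letterEval (p : Fin k × Bool) :
    Continuous fun g : Fin k → G => letterEval g p := by
  unfold letterEval
  cases p.2
  · exact (continuous_apply p.1).inv
  · exact continuous_apply p.1

theorem continuous_prefixEval (v : ℕ → Fin k × Bool) (j : ℕ) :
    Continuous fun g : Fin k → G => prefixEval v g j := by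
  induction j with
  | zero => exact continuous_const
  | succ j ih => exact (continuous_letterEval (v j)).mul ih

theorem isClosed_setOf_traj_eq {X : Type*} [MulAction G X] {x₀ : X}
    (hclosed : IsClosed {g : G | g • x₀ = x₀}) (v : ℕ → Fin k × Bool) (i j : ℕ) :
    IsClosed {g : Fin k → G | traj g v x₀ i = traj g v x₀ j} := by
  have hpre : {g : Fin k → G | traj g v x₀ i = traj g v x₀ j} =
      (fun g => (prefixEval v g i)⁻¹ * prefixEval v g j) ⁻¹' {g : G | g • x₀ = x₀} := by
    ext g
    change _ = _ ↔ _ = _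
    rw [traj_eq_prefixEval_smul, traj_eq_prefixEval_smul, mul_smul, inv_smul_eq_iff, eq_comm]
  rw [hpre]
  exact hclosed.preimage ((continuous_prefixEval v i).inv.mul (continuous_prefixEval v j))

end

theorem distinct_trajectory_isOpen_general {G X : Type*} [Group G] [TopologicalSpace G]
    [IsTopologicalGroup G] [MulAction G X]
    (x₀ : X) (hclosed : IsClosed {g : G | g • x₀ = x₀})
    {k n : ℕ} (v : ℕ → Fin k × Bool) :
    IsOpen {g : Fin k → G | ∀ i j, i ≤ n → j ≤ n → i ≠ j →
      traj g v x₀ i ≠ traj g v x₀ j} := by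
  have hpair (i j : ℕ) :
      IsOpen {g : Fin k → G | i ≠ j → traj g v x₀ i ≠ traj g v x₀ j} := by
    by_cases hij : i = j
    · simp [hij]
    · simp only [hij, ne_eq, not_false_eq_true, forall_const]
      exact (isClosed_setOf_traj_eq hclosed v i j).isOpen_compl
  have hinter : {g : Fin k → G | ∀ i j, i ≤ n → j ≤ n → i ≠ j →
      traj g v x₀ i ≠ traj g v x₀ j} =
      ⋂ i ∈ Set.Iic n, ⋂ j ∈ Set.Iic n, {g | i ≠ j → traj g v x₀ i ≠ traj g v x₀ j} := by
    ext g
    simp only [Set.mem_iInter, Set.mem_Iic, Set.mem_ofPred_eq]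
    exact ⟨fun h i hi j hj => h i j hi hj, fun h i j hi hj => h i hi j hj⟩
  rw [hinter]
  exact (Set.finite_Iic n).isOpen_biInter fun i _ =>
    (Set.finite_Iic n).isOpen_biInter fun j _ => hpair i j

/-- Let `G` be a Hausdorff topological group acting on a set `X`, let `x₀ ∈ X`
have closed stabilizer, and let `w = v_1 ⋯ v_n` be a reduced word on `k`
generators.  Then the set of tuples `(g_1, …, g_k) ∈ G^k` whose trajectory
points `x_0, x_1, …, x_n` of `x₀` are pairwise distinct is open in `G^k`. -/
theorem distinct_trajectory_isOpen {G X : Type*} [Group G] [TopologicalSpace G]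
    [IsTopologicalGroup G] [T2Space G] [MulAction G X]
    (x₀ : X) (hclosed : IsClosed {g : G | g • x₀ = x₀})
    {k n : ℕ} (v : ℕ → Fin k × Bool) (hred : IsReducedWord n v) :
    IsOpen {g : Fin k → G | ∀ i j, i ≤ n → j ≤ n → i ≠ j →
      traj g v x₀ i ≠ traj g v x₀ j} :=
  distinct_trajectory_isOpen_general x₀ hclosed v
end
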